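/- arXiv:2106.06710 — 4 statements merged into one kernel-verified Lean document; each statement's English description precedes it below -/
import Mathlib

section
/- Let G be a finite simple connected graph on n vertices and let ρ_j (0 ≤ j ≤ n) be the coefficients of the characteristic polynomial of its transition matrix T, det(xI_n − T) = Σ_{j=0}^n ρ_j x^j. If G is periodic, then 2^j · ρ_{n−j} is an integer for every 0 ≤ j ≤ n. -/
open Matrix

attribute [local instance] Classical.propDecidable

namespace GroverPaper

variable {V : Type*}

/-- The arc set of a simple graph: ordered pairs of adjacent vertices. -/
abbrev Arc (G : SimpleGraph V) : Type _ := {p : V × V // G.Adj p.1 p.2}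

/-- The time evolution matrix of the Grover walk on a graph `G`. -/
noncomputable def groverU [Fintype V] (G : SimpleGraph V) :
    Matrix (Arc G) (Arc G) ℂ := fun e f =>
  if f.val.2 = e.val.1 then
    if e.val = (f.val.2, f.val.1) then 2 / (G.degree f.val.2 : ℂ) - 1
    else 2 / (G.degree f.val.2 : ℂ)
  else 0

/-- A graph is periodic if some positive power of its Grover evolution is the identity. -/
def IsPeriodic [Fintype V] (G : SimpleGraph V) : Prop :=
  ∃ k : ℕ, 0 < k ∧ groverU G ^ k = 1

/-- The period of a periodic graph: the least positive `k` with `U^k = 1`. -/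
noncomputable def period [Fintype V] (G : SimpleGraph V) : ℕ :=
  sInf {k : ℕ | 0 < k ∧ groverU G ^ k = 1}

/-- A graph is `k`-periodic if it is periodic with period `k`. -/
def IsKPeriodic [Fintype V] (G : SimpleGraph V) (k : ℕ) : Prop :=
  IsPeriodic G ∧ period G = k

/-- A graph is odd-periodic if it is periodic with odd period. -/
def IsOddPeriodic [Fintype V] (G : SimpleGraph V) : Prop :=
  IsPeriodic G ∧ Odd (period G)

/-- The transition matrix of the isotropic random walk on `G`. -/
noncomputable def transition [Fintype V] (G : SimpleGraph V) :
    Matrix V V ℝ := fun u v =>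
  if G.Adj u v then 1 / (G.degree u : ℝ) else 0

section Aux
open Polynomial

/-- Summing a function over the arcs whose terminus is `u`. -/
lemma sum_arc_if [Fintype V] (G : SimpleGraph V) (u : V) (F : V × V → ℂ) :
    (∑ a : Arc G, if a.val.2 = u then F a.val else 0)
      = ∑ x : V, if G.Adj u x then F (x, u) else 0 := by
  have h1 : (∑ a : Arc G, if a.val.2 = u then F a.val else 0)
      = ∑ p ∈ Finset.univ.filter (fun p : V × V => G.Adj p.1 p.2),
          (if p.2 = u then F p else 0) :=
    (Finset.sum_subtype (Finset.univ.filter (fun p : V × V => G.Adj p.1 p.2))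
      (fun p => by simp) (fun p => if p.2 = u then F p else 0)).symm
  rw [h1, Finset.sum_filter, Fintype.sum_prod_type]
  refine Finset.sum_congr rfl fun x _ => ?_
  have h2 : ∀ y : V, (if G.Adj x y then if y = u then F (x, y) else 0 else 0)
      = if y = u then (if G.Adj u x then F (x, u) else 0) else 0 := by
    intro y
    by_cases hy : y = u
    · subst hy; by_cases h : G.Adj x y <;> simp [h, G.adj_comm]
    · simp [hy]
  rw [Finset.sum_congr rfl fun y _ => h2 y, Finset.sum_ite_eq' Finset.univ u]
  simp

/-- Row-wise version of the eigenvector equation of the transition matrix. -/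
lemma transition_row [Fintype V] (G : SimpleGraph V) {μ : ℂ} {f : V → ℂ}
    (hf : ((transition G).map Complex.ofReal).mulVec f = μ • f) (u : V) :
    (∑ x : V, if G.Adj u x then f x else 0) = (G.degree u : ℂ) * (μ * f u) := by
  have h := congrFun hf u
  simp only [Matrix.mulVec, dotProduct, Matrix.map_apply, transition, Pi.smul_apply,
    smul_eq_mul, apply_ite Complex.ofReal, Complex.ofReal_div, Complex.ofReal_one,
    Complex.ofReal_natCast, Complex.ofReal_zero, Complex.ofReal_inv, ite_mul, zero_mul,
    one_div] at h
  by_cases hd : (G.degree u : ℂ) = 0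
  · have hdn : G.degree u = 0 := by exact_mod_cast hd
    have hnone : ∀ x, ¬ G.Adj u x := by
      intro x hx
      have : 0 < G.degree u := G.degree_pos_iff_exists_adj u |>.mpr ⟨x, hx⟩
      omega
    simp [hnone, hd]
  · calc (∑ x : V, if G.Adj u x then f x else 0)
        = ∑ x : V, if G.Adj u x then (G.degree u : ℂ) * ((G.degree u : ℂ)⁻¹ * f x) else 0 := by
          refine Finset.sum_congr rfl fun x _ => ?_
          by_cases h' : G.Adj u x <;> simp [h', hd, mul_inv_cancel_left₀]
      _ = (G.degree u : ℂ) * ∑ x : V, if G.Adj u x then (G.degree u : ℂ)⁻¹ * f x else 0 := by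
          rw [Finset.mul_sum]
          exact Finset.sum_congr rfl fun x _ => by by_cases h' : G.Adj u x <;> simp [h']
      _ = (G.degree u : ℂ) * (μ * f u) := by rw [h]

lemma degree_sum [Fintype V] (G : SimpleGraph V) (u : V) (c : ℂ) :
    (∑ x : V, if G.Adj u x then c else 0) = (G.degree u : ℂ) * c := by
  rw [← Finset.sum_filter, Finset.sum_const, nsmul_eq_mul]
  congr 2
  have : Finset.univ.filter (fun x => G.Adj u x) = G.neighborFinset u := by
    ext x; simp
  rw [this]
  exact (SimpleGraph.card_neighborFinset_eq_degree G u)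

/-- Key computation: the vector `e ↦ f(t(e)) - λ f(o(e))` is a `λ`-eigenvector of the
Grover walk, whenever `f` is a `μ`-eigenvector of the transition matrix and
`λ² - 2μλ + 1 = 0`. -/
lemma grover_eig [Fintype V] (G : SimpleGraph V) {μ lam : ℂ} (f : V → ℂ)
    (hf : ((transition G).map Complex.ofReal).mulVec f = μ • f)
    (hlam : lam ^ 2 - 2 * μ * lam + 1 = 0) :
    (groverU G).mulVec (fun e : Arc G => f e.val.2 - lam * f e.val.1)
      = lam • fun e : Arc G => f e.val.2 - lam * f e.val.1 := by
  funext e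
  obtain ⟨⟨u, w⟩, hadj⟩ := e
  set ψ : Arc G → ℂ := fun e : Arc G => f e.val.2 - lam * f e.val.1 with hψ
  set ebar : Arc G := ⟨(w, u), hadj.symm⟩ with hebar
  have hpos : 0 < G.degree u := (G.degree_pos_iff_exists_adj u).mpr ⟨w, hadj⟩
  have hD : (G.degree u : ℂ) ≠ 0 := Nat.cast_ne_zero.mpr hpos.ne'
  have hsplit : ∀ a : Arc G, groverU G ⟨(u, w), hadj⟩ a * ψ a
      = (if a.val.2 = u then (2 / (G.degree u : ℂ)) * ψ a else 0)
        - (if a = ebar then ψ a else 0) := by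
    intro a
    by_cases h1 : a.val.2 = u
    · by_cases h2 : a = ebar
      · have hv : a.val = (w, u) := by rw [h2]
        have hcond : ((u, w) : V × V) = (a.val.2, a.val.1) := by rw [hv]
        have hU : groverU G ⟨(u, w), hadj⟩ a = 2 / (G.degree u : ℂ) - 1 := by
          simp only [groverU]
          rw [if_pos h1, if_pos hcond, h1]
        rw [hU, if_pos h1, if_pos h2]
        ring
      · have hcond : ((u, w) : V × V) ≠ (a.val.2, a.val.1) := by
          intro hc
          apply h2
          apply Subtype.ext
          have h1' : a.val.1 = w := by
            have := congrArg Prod.snd hc; simpa using this.symm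
          have : a.val = (a.val.1, a.val.2) := rfl
          rw [hebar]; rw [this, h1', h1]
        have hU : groverU G ⟨(u, w), hadj⟩ a = 2 / (G.degree u : ℂ) := by
          simp only [groverU]
          rw [if_pos h1, if_neg hcond, h1]
        rw [hU, if_pos h1, if_neg h2, sub_zero]
    · have h2 : a ≠ ebar := by
        intro hc; apply h1; rw [hc]
      have hU : groverU G ⟨(u, w), hadj⟩ a = 0 := by
        simp only [groverU]
        rw [if_neg h1]
      rw [hU, if_neg h1, if_neg h2, zero_mul, sub_zero]
  have hmv : (groverU G).mulVec ψ ⟨(u, w), hadj⟩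
      = (2 / (G.degree u : ℂ)) * (∑ a : Arc G, if a.val.2 = u then ψ a else 0) - ψ ebar := by
    simp only [Matrix.mulVec, dotProduct]
    rw [Finset.sum_congr rfl fun a _ => hsplit a, Finset.sum_sub_distrib]
    congr 1
    · rw [Finset.mul_sum]
      exact Finset.sum_congr rfl fun a _ => by by_cases h : a.val.2 = u <;> simp [h]
    · rw [Finset.sum_ite_eq' Finset.univ ebar]
      simp
  have hS : (∑ a : Arc G, if a.val.2 = u then ψ a else 0)
      = (G.degree u : ℂ) * f u - lam * ((G.degree u : ℂ) * (μ * f u)) := by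
    have := sum_arc_if G u (fun p => f p.2 - lam * f p.1)
    rw [hψ]
    simp only at this ⊢
    rw [this]
    have hsub : (∑ x : V, if G.Adj u x then f u - lam * f x else 0)
        = (∑ x : V, if G.Adj u x then f u else 0)
          - lam * ∑ x : V, if G.Adj u x then f x else 0 := by
      rw [Finset.mul_sum, ← Finset.sum_sub_distrib]
      exact Finset.sum_congr rfl fun x _ => by by_cases h : G.Adj u x <;> simp [h]
    rw [hsub, degree_sum G u (f u), transition_row G hf u]
  rw [hmv, hS]
  have : ψ ebar = f u - lam * f w := rfl
  rw [this]
  have hgoal : (lam • ψ) ⟨(u, w), hadj⟩ = lam * (f w - lam * f u) := rfl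
  rw [hgoal]
  have hexp : (2 / (G.degree u : ℂ)) * ((G.degree u : ℂ) * f u
      - lam * ((G.degree u : ℂ) * (μ * f u))) = 2 * f u - 2 * lam * μ * f u := by
    field_simp
  rw [hexp]
  linear_combination (f u) * hlam

/-- Eigenvalues of a matrix satisfying `M^k = 1` are `k`-th roots of unity. -/
lemma eig_pow_one {n : Type*} [Fintype n] [DecidableEq n] {M : Matrix n n ℂ} {k : ℕ}
    (hU : M ^ k = 1) {lam : ℂ} {ψ : n → ℂ} (hψ : ψ ≠ 0)
    (h : M.mulVec ψ = lam • ψ) : lam ^ k = 1 := by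
  have hpow : ∀ m : ℕ, (M ^ m).mulVec ψ = lam ^ m • ψ := by
    intro m
    induction m with
    | zero => simp [Matrix.one_mulVec]
    | succ m ih =>
        rw [pow_succ, ← Matrix.mulVec_mulVec, h, Matrix.mulVec_smul, ih, smul_smul,
          ← pow_succ']
  have hk := hpow k
  rw [hU, Matrix.one_mulVec] at hk
  obtain ⟨e, he⟩ := Function.ne_iff.mp hψ
  have := congrFun hk e
  simp only [Pi.smul_apply, smul_eq_mul] at this
  have h1 : (lam ^ k - 1) * ψ e = 0 := by linear_combination -this
  rcases mul_eq_zero.mp h1 with h | h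
  · exact sub_eq_zero.mp h
  · exact absurd h he

lemma isIntegral_of_pow_eq_one {x : ℂ} {k : ℕ} (hk : k ≠ 0) (h : x ^ k = 1) :
    IsIntegral ℤ x := by
  refine ⟨X ^ k - C 1, monic_X_pow_sub_C 1 hk, ?_⟩
  simp [h]

/-- A root of the characteristic polynomial admits a nonzero eigenvector. -/
lemma exists_eigvec {n : Type*} [Fintype n] [DecidableEq n] (M : Matrix n n ℂ) {r : ℂ}
    (h : M.charpoly.IsRoot r) : ∃ f : n → ℂ, f ≠ 0 ∧ M.mulVec f = r • f := by
  have hdet : ((r • (1 : Matrix n n ℂ)) - M).det = 0 := by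
    have heval : M.charpoly.eval r = ((r • (1 : Matrix n n ℂ)) - M).det := by
      rw [Matrix.charpoly]
      have hmap : eval r (Matrix.charmatrix M).det
          = ((Matrix.charmatrix M).map (eval r)).det :=
        RingHom.map_det (Polynomial.evalRingHom r) (Matrix.charmatrix M)
      rw [hmap]
      congr 1
      ext i j
      by_cases hij : i = j
      · subst hij
        simp [Matrix.charmatrix_apply_eq, Matrix.one_apply]
      · simp [Matrix.charmatrix_apply_ne _ _ _ hij, Matrix.one_apply_ne hij]
    rw [← heval]; exact h
  obtain ⟨v, hv0, hv⟩ := (Matrix.exists_mulVec_eq_zero_iff).mpr hdet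
  refine ⟨v, hv0, ?_⟩
  rw [Matrix.sub_mulVec] at hv
  have h1 : (r • (1 : Matrix n n ℂ)).mulVec v = r • v := by
    rw [Matrix.smul_mulVec, Matrix.one_mulVec]
  rw [h1] at hv
  have := sub_eq_zero.mp hv
  rw [← this]

lemma isIntegral_esymm {s : Multiset ℂ} (h : ∀ x ∈ s, IsIntegral ℤ x) (j : ℕ) :
    IsIntegral ℤ (s.esymm j) := by
  have : s.esymm j ∈ integralClosure ℤ ℂ := by
    apply Subalgebra.multiset_sum_mem
    intro x hx
    obtain ⟨t, ht, rfl⟩ := Multiset.mem_map.mp hx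
    have hts : t ≤ s := (Multiset.mem_powersetCard.mp ht).1
    exact Subalgebra.multiset_prod_mem _ fun y hy => h y (Multiset.mem_of_le hts hy)
  exact this

/-- The heart of the argument: if `G` is periodic and `μ` is an eigenvalue of the
transition matrix, then `2μ` is an algebraic integer. -/
lemma isIntegral_two_mul_eig [Fintype V] (G : SimpleGraph V)
    (hG : IsPeriodic G) {μ : ℂ} {f : V → ℂ} (hf0 : f ≠ 0)
    (hf : ((transition G).map Complex.ofReal).mulVec f = μ • f) :
    IsIntegral ℤ (2 * μ) := by
  obtain ⟨k, hk, hU⟩ := hG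
  obtain ⟨z, hz⟩ := IsAlgClosed.exists_pow_nat_eq (μ ^ 2 - 1) (n := 2) (by norm_num)
  set lam : ℂ := μ + z with hlamdef
  have hlam : lam ^ 2 - 2 * μ * lam + 1 = 0 := by
    rw [hlamdef]; linear_combination hz
  have hlam0 : lam ≠ 0 := by
    intro h0
    rw [h0] at hlam
    simp at hlam
  have hsum : lam + lam⁻¹ = 2 * μ := by
    field_simp
    linear_combination hlam
  by_cases hψ : (fun e : Arc G => f e.val.2 - lam * f e.val.1) = (0 : Arc G → ℂ)
  · obtain ⟨v, hv⟩ := Function.ne_iff.mp hf0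
    by_cases hnb : ∃ w, G.Adj v w
    · obtain ⟨w, hw⟩ := hnb
      have h1 : f w - lam * f v = 0 := congrFun hψ ⟨(v, w), hw⟩
      have h2 : f v - lam * f w = 0 := congrFun hψ ⟨(w, v), hw.symm⟩
      have hl2 : lam ^ 2 = 1 := by
        have h3 : (lam ^ 2 - 1) * f v = 0 := by linear_combination -h2 - lam * h1
        rcases mul_eq_zero.mp h3 with h | h
        · exact sub_eq_zero.mp h
        · exact absurd h hv
      have hint : IsIntegral ℤ lam := isIntegral_of_pow_eq_one (by norm_num) hl2
      have hinv : lam⁻¹ = lam := by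
        have : lam * lam = 1 := by rw [← sq]; exact hl2
        exact inv_eq_of_mul_eq_one_right this
      rw [← hsum, hinv]
      exact hint.add hint
    · push_neg at hnb
      have hμ0 : μ = 0 := by
        have h := congrFun hf v
        simp only [Matrix.mulVec, dotProduct, Matrix.map_apply, transition, Pi.smul_apply,
          smul_eq_mul] at h
        rw [Finset.sum_eq_zero (fun x _ => by simp [hnb x])] at h
        rcases mul_eq_zero.mp h.symm with h' | h'
        · exact h'
        · exact absurd h' hv
      rw [hμ0, mul_zero]
      exact isIntegral_zero
  · have heig := grover_eig G f hf hlam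
    have hlamk : lam ^ k = 1 := eig_pow_one hU hψ heig
    have hint : IsIntegral ℤ lam := isIntegral_of_pow_eq_one hk.ne' hlamk
    have hinv : lam⁻¹ = lam ^ (k - 1) := by
      have h1 : lam * lam ^ (k - 1) = 1 := by
        rw [← pow_succ', Nat.sub_add_cancel hk]
        exact hlamk
      exact inv_eq_of_mul_eq_one_right h1
    rw [← hsum, hinv]
    exact hint.add (hint.pow _)

end Aux

/-- If a finite simple connected graph `G` on `n` vertices is periodic, then
`2^j · ρ_{n-j}` is an integer for all `0 ≤ j ≤ n`, where the `ρ_i` are the coefficients of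
the characteristic polynomial of the transition matrix of `G`. -/
theorem periodic_charpoly_coeff {V : Type*} [Fintype V] [DecidableEq V] (G : SimpleGraph V)
    (hconn : G.Connected) (hG : IsPeriodic G) :
    ∀ j : ℕ, j ≤ Fintype.card V →
      ∃ m : ℤ, (2 : ℝ) ^ j * (transition G).charpoly.coeff (Fintype.card V - j) = (m : ℝ) := by
  intro j hj
  set n := Fintype.card V with hn
  set Aq : Matrix V V ℚ := Matrix.of fun u v =>
    if G.Adj u v then ((G.degree u : ℚ))⁻¹ else 0 with hAq
  have hmapR : Aq.map (Rat.castHom ℝ) = transition G := by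
    ext u v
    simp only [Matrix.map_apply, hAq, Matrix.of_apply, transition, one_div]
    by_cases h : G.Adj u v <;> simp [h]
  have hchR : (transition G).charpoly = Aq.charpoly.map (Rat.castHom ℝ) := by
    rw [← hmapR, Matrix.charpoly_map]
  set Tc : Matrix V V ℂ := (transition G).map Complex.ofReal with hTc
  have hmapC : Aq.map (Rat.castHom ℂ) = Tc := by
    rw [hTc, ← hmapR]
    ext u v
    simp only [Matrix.map_apply]
    push_cast
    rfl
  have hchC : Tc.charpoly = Aq.charpoly.map (Rat.castHom ℂ) := by
    rw [← hmapC, Matrix.charpoly_map]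
  set c : ℚ := 2 ^ j * Aq.charpoly.coeff (n - j) with hc
  have hPc_deg : Tc.charpoly.natDegree = n := Matrix.charpoly_natDegree_eq_dim Tc
  have hsplits : Tc.charpoly.Splits := IsAlgClosed.splits _
  have hmon : Tc.charpoly.Monic := Matrix.charpoly_monic Tc
  have hroots_int : ∀ x ∈ Tc.charpoly.roots.map (fun r => (2 : ℂ) • r), IsIntegral ℤ x := by
    intro x hx
    obtain ⟨r, hr, rfl⟩ := Multiset.mem_map.mp hx
    have hroot : Tc.charpoly.IsRoot r := Polynomial.isRoot_of_mem_roots hr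
    obtain ⟨g, hg0, hgr⟩ := exists_eigvec Tc hroot
    have : IsIntegral ℤ (2 * r) := isIntegral_two_mul_eig G hG hg0 hgr
    simpa [smul_eq_mul] using this
  have hint : IsIntegral ℤ ((c : ℂ)) := by
    have h1 : (c : ℂ) = 2 ^ j * Tc.charpoly.coeff (n - j) := by
      rw [hchC, Polynomial.coeff_map, hc, Rat.coe_castHom]
      push_cast
      ring
    have hcoeff := Polynomial.coeff_eq_esymm_roots_of_splits hsplits
      (k := n - j) (by rw [hPc_deg]; omega)
    have h2 : (2 : ℂ) ^ j * Tc.charpoly.coeff (n - j)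
        = (-1) ^ j * ((Tc.charpoly.roots.map (fun r => (2 : ℂ) • r)).esymm j) := by
      rw [hcoeff, hmon.leadingCoeff, one_mul, hPc_deg, Nat.sub_sub_self hj]
      rw [← Multiset.pow_smul_esymm (2 : ℂ) j]
      simp only [smul_eq_mul]
      ring
    rw [h1, h2]
    have hneg : IsIntegral ℤ ((-1 : ℂ)) := by
      simpa using isIntegral_algebraMap (R := ℤ) (A := ℂ) (x := (-1 : ℤ))
    exact (hneg.pow j).mul (isIntegral_esymm hroots_int j)
  have hintq : IsIntegral ℤ c := by
    have hinj : Function.Injective (algebraMap ℚ ℂ) := (algebraMap ℚ ℂ).injective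
    have hcast : algebraMap ℚ ℂ c = (c : ℂ) := by norm_cast
    rw [← hcast] at hint
    exact (isIntegral_algebraMap_iff hinj).mp hint
  obtain ⟨m, hm⟩ := IsIntegrallyClosed.isIntegral_iff.mp hintq
  refine ⟨m, ?_⟩
  have hmq : (m : ℚ) = c := hm
  have h2 : ((m : ℚ) : ℝ) = ((c : ℚ) : ℝ) := by rw [hmq]
  rw [hc] at h2
  push_cast at h2
  rw [hchR, Polynomial.coeff_map, Rat.coe_castHom]
  linarith [h2]


end GroverPaper
end

section
/- A finite simple connected graph G is periodic if and only if arccos(λ) ∈ πℚ (i.e. arccos(λ) is a rational multiple of π) for every eigenvalue λ of its transition matrix T. -/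
set_option linter.unusedSectionVars false


open Matrix

attribute [local instance] Classical.propDecidable

namespace GroverPaper

variable {V : Type*}

namespace Aux

open Finset

variable {V : Type*} [Fintype V] (G : SimpleGraph V)

/-- Reversal of an arc. -/
def arev (e : Arc G) : Arc G := ⟨(e.val.2, e.val.1), e.prop.symm⟩

@[simp] lemma arev_arev (e : Arc G) : arev G (arev G e) = e := rfl

/-- `(√(deg v))⁻¹` as a complex number. -/
noncomputable def aval (v : V) : ℂ := ((Real.sqrt (G.degree v))⁻¹ : ℝ)

@[simp] lemma star_aval (v : V) : star (aval G v) = aval G v := by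
  simp [aval, Complex.star_def, Complex.conj_ofReal]

lemma aval_mul_self {v : V} (hv : 0 < G.degree v) :
    aval G v * aval G v = ((G.degree v : ℂ))⁻¹ := by
  have h0 : (0:ℝ) ≤ (G.degree v : ℝ) := by positivity
  simp only [aval, ← Complex.ofReal_mul]
  rw [← mul_inv, Real.mul_self_sqrt h0]
  simp

lemma aval_ne_zero {v : V} (hv : 0 < G.degree v) : aval G v ≠ 0 := by
  have : Real.sqrt (G.degree v) ≠ 0 := by
    refine ne_of_gt (Real.sqrt_pos.mpr ?_)
    exact_mod_cast hv
  simp [aval, this]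

/-- The (normalized) terminal incidence matrix. -/
noncomputable def dmat : Matrix V (Arc G) ℂ := fun v e => if e.val.2 = v then aval G v else 0

/-- The (normalized) origin incidence matrix. -/
noncomputable def omat : Matrix V (Arc G) ℂ := fun v e => if e.val.1 = v then aval G v else 0

/-- The arc-reversal (shift) matrix. -/
noncomputable def smat : Matrix (Arc G) (Arc G) ℂ := fun e f => if f = arev G e then 1 else 0

/-- The symmetrized transition matrix. -/
noncomputable def mmat : Matrix V V ℂ := fun u v => if G.Adj u v then aval G u * aval G v else 0

lemma card_term (v : V) : (univ.filter fun e : Arc G => e.val.2 = v).card = G.degree v := by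
  rw [SimpleGraph.degree]
  apply Finset.card_bij (fun (e : Arc G) _ => e.val.1)
  · intro e he
    simp only [mem_filter] at he
    rw [SimpleGraph.mem_neighborFinset]
    exact (he.2 ▸ e.prop).symm
  · intro e₁ h₁ e₂ h₂ h
    simp only [mem_filter] at h₁ h₂
    exact Subtype.ext (Prod.ext h (h₁.2.trans h₂.2.symm))
  · intro w hw
    rw [SimpleGraph.mem_neighborFinset] at hw
    exact ⟨⟨(w, v), hw.symm⟩, by simp, rfl⟩

lemma dmat_mul_conjTranspose (hd : ∀ v, 0 < G.degree v) : dmat G * (dmat G)ᴴ = 1 := by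
  ext u w
  rw [Matrix.mul_apply, Matrix.one_apply]
  by_cases h : u = w
  · subst h
    rw [if_pos rfl]
    have key : ∀ e : Arc G, dmat G u e * (dmat G)ᴴ e u
        = if e.val.2 = u then aval G u * aval G u else 0 := by
      intro e
      rw [Matrix.conjTranspose_apply]
      simp only [dmat]
      split_ifs with h1
      · rw [star_aval]
      · simp
    rw [Finset.sum_congr rfl fun e _ => key e, ← Finset.sum_filter, Finset.sum_const,
      card_term, nsmul_eq_mul, aval_mul_self G (hd u), mul_inv_cancel₀]
    exact Nat.cast_ne_zero.mpr (hd u).ne'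
  · rw [if_neg h]
    apply Finset.sum_eq_zero
    intro e _
    rw [Matrix.conjTranspose_apply]
    simp only [dmat]
    split_ifs with h1 h2
    · exact absurd (h1.symm.trans h2) h
    all_goals simp

lemma arev_eq_comm {e f : Arc G} : f = arev G e ↔ e = arev G f := by
  constructor <;> rintro rfl <;> simp

lemma smat_mul_smat : smat G * smat G = 1 := by
  ext e g
  rw [Matrix.mul_apply, Matrix.one_apply]
  rw [Finset.sum_eq_single (arev G e)]
  · have h1 : smat G e (arev G e) = 1 := by simp [smat]
    rw [h1, one_mul]
    simp only [smat, arev_arev]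
    by_cases h : e = g
    · simp [h]
    · have h' : ¬ g = e := fun hh => h hh.symm
      simp [h, h']
  · intro f _ hf
    rw [smat, if_neg hf, zero_mul]
  · simp

lemma smat_conjTranspose : (smat G)ᴴ = smat G := by
  ext e f
  rw [Matrix.conjTranspose_apply]
  simp only [smat]
  by_cases h : e = arev G f
  · rw [if_pos h, if_pos (arev_eq_comm G |>.mpr h), star_one]
  · rw [if_neg h, if_neg (fun hh => h (arev_eq_comm G |>.mp hh)), star_zero]

lemma dmat_mul_smat : dmat G * smat G = omat G := by
  ext v f
  rw [Matrix.mul_apply]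
  rw [Finset.sum_eq_single (arev G f)]
  · have h1 : smat G (arev G f) f = 1 := by simp [smat]
    rw [h1, mul_one]
    simp [dmat, omat, arev]
    exact if_congr Iff.rfl rfl rfl
  · intro e _ he
    have h2 : ¬ (f = arev G e) := fun h => he ((arev_eq_comm G).mp h)
    rw [smat, if_neg h2, mul_zero]
  · simp

lemma omat_mul_conjTranspose_dmat : omat G * (dmat G)ᴴ = mmat G := by
  ext u v
  rw [Matrix.mul_apply]
  simp only [mmat]
  by_cases h : G.Adj u v
  · rw [if_pos h, Finset.sum_eq_single (⟨(u, v), h⟩ : Arc G)]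
    · rw [Matrix.conjTranspose_apply]
      simp [omat, dmat]
    · intro f _ hf
      rw [Matrix.conjTranspose_apply]
      simp only [omat, dmat]
      by_cases h1 : f.val.1 = u
      · have h2 : ¬ f.val.2 = v := fun h2 => hf (Subtype.ext (Prod.ext h1 h2))
        simp [h2]
      · simp [h1]
    · simp
  · rw [if_neg h]
    apply Finset.sum_eq_zero
    intro f _
    rw [Matrix.conjTranspose_apply]
    simp only [omat, dmat]
    by_cases h1 : f.val.1 = u
    · have h2 : ¬ f.val.2 = v := fun h2 => h (h1 ▸ h2 ▸ f.prop)
      simp [h2]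
    · simp [h1]

lemma cmat_apply (g f : Arc G) : ((dmat G)ᴴ * dmat G) g f
    = if g.val.2 = f.val.2 then aval G f.val.2 * aval G f.val.2 else 0 := by
  rw [Matrix.mul_apply]
  rw [Finset.sum_eq_single f.val.2]
  · rw [Matrix.conjTranspose_apply]
    simp only [dmat]
    by_cases h : g.val.2 = f.val.2 <;> simp [h]
  · intro v _ hv
    rw [Matrix.conjTranspose_apply]
    simp only [dmat]
    have : (if f.val.2 = v then aval G v else 0) = 0 := if_neg (fun h => hv h.symm)
    rw [this, mul_zero]
  · simp

lemma arev_eq_iff_val {e f : Arc G} : arev G e = f ↔ e.val = (f.val.2, f.val.1) := by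
  constructor
  · rintro rfl; rfl
  · intro h
    apply Subtype.ext
    rw [show f = arev G (arev G f) from rfl]
    simp only [arev]
    rw [h]

lemma groverU_eq (hd : ∀ v, 0 < G.degree v) :
    groverU G = smat G * ((2:ℂ) • ((dmat G)ᴴ * dmat G) - 1) := by
  ext e f
  rw [Matrix.mul_apply]
  rw [Finset.sum_eq_single (arev G e)]
  · have h1 : smat G e (arev G e) = 1 := by simp [smat]
    rw [h1, one_mul, Matrix.sub_apply, Matrix.smul_apply, cmat_apply, Matrix.one_apply]
    have harev2 : (arev G e).val.2 = e.val.1 := rfl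
    rw [harev2]
    simp only [groverU]
    by_cases h : f.val.2 = e.val.1
    · rw [if_pos h, if_pos h.symm, aval_mul_self G (hd f.val.2)]
      have hdeg : ((G.degree f.val.2 : ℂ)) ≠ 0 := Nat.cast_ne_zero.mpr (hd f.val.2).ne'
      by_cases h2 : e.val = (f.val.2, f.val.1)
      · rw [if_pos h2, if_pos ((arev_eq_iff_val G).mpr h2)]
        simp only [smul_eq_mul]
        field_simp
      · rw [if_neg h2, if_neg (fun hh => h2 ((arev_eq_iff_val G).mp hh))]
        simp only [smul_eq_mul]
        field_simp
        ring
    · rw [if_neg h, if_neg (fun hh => h hh.symm),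
        if_neg (fun hh : arev G e = f => h (by rw [← hh]; rfl))]
      simp
  · intro g _ hg
    rw [smat, if_neg hg, zero_mul]
  · simp

lemma mmat_herm : (mmat G)ᴴ = mmat G := by
  ext u v
  rw [Matrix.conjTranspose_apply]
  simp only [mmat]
  by_cases h : G.Adj v u
  · rw [if_pos h, if_pos h.symm, star_mul', star_aval, star_aval, mul_comm]
  · rw [if_neg h, if_neg (fun hh => h hh.symm), star_zero]

lemma U_mul_dT (hd : ∀ v, 0 < G.degree v) :
    groverU G * (dmat G)ᴴ = smat G * (dmat G)ᴴ := by
  have hC : ((2:ℂ) • ((dmat G)ᴴ * dmat G) - 1) * (dmat G)ᴴ = (dmat G)ᴴ := by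
    rw [Matrix.sub_mul, Matrix.smul_mul, Matrix.mul_assoc,
      dmat_mul_conjTranspose G hd, Matrix.mul_one, Matrix.one_mul, two_smul]
    abel
  rw [groverU_eq G hd, Matrix.mul_assoc, hC]

lemma U_mul_SdT (hd : ∀ v, 0 < G.degree v) :
    groverU G * (smat G * (dmat G)ᴴ) =
      (2:ℂ) • (smat G * (dmat G)ᴴ * mmat G) - (dmat G)ᴴ := by
  have h1 : dmat G * (smat G * (dmat G)ᴴ) = mmat G := by
    rw [← Matrix.mul_assoc, dmat_mul_smat, omat_mul_conjTranspose_dmat]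
  have hC : ((2:ℂ) • ((dmat G)ᴴ * dmat G) - 1) * (smat G * (dmat G)ᴴ)
      = (2:ℂ) • ((dmat G)ᴴ * mmat G) - smat G * (dmat G)ᴴ := by
    rw [Matrix.sub_mul, Matrix.smul_mul, Matrix.one_mul, Matrix.mul_assoc, h1]
  rw [groverU_eq G hd, Matrix.mul_assoc, hC, Matrix.mul_sub, Matrix.mul_smul,
    ← Matrix.mul_assoc, ← Matrix.mul_assoc, smat_mul_smat, Matrix.one_mul,
    Matrix.mul_assoc (smat G)]

lemma unitaryU (hd : ∀ v, 0 < G.degree v) : (groverU G)ᴴ * groverU G = 1 := by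
  have hAA : ((dmat G)ᴴ * dmat G) * ((dmat G)ᴴ * dmat G) = (dmat G)ᴴ * dmat G := by
    rw [Matrix.mul_assoc, ← Matrix.mul_assoc (dmat G), dmat_mul_conjTranspose G hd,
      Matrix.one_mul]
  have hCH : ((2:ℂ) • ((dmat G)ᴴ * dmat G) - 1)ᴴ = (2:ℂ) • ((dmat G)ᴴ * dmat G) - 1 := by
    rw [Matrix.conjTranspose_sub, Matrix.conjTranspose_smul, Matrix.conjTranspose_one,
      Matrix.conjTranspose_mul, Matrix.conjTranspose_conjTranspose]
    norm_num
  have hAC : ((dmat G)ᴴ * dmat G) * ((2:ℂ) • ((dmat G)ᴴ * dmat G) - 1)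
      = (dmat G)ᴴ * dmat G := by
    rw [Matrix.mul_sub, Matrix.mul_smul, hAA, Matrix.mul_one, two_smul]
    abel
  have hCC : ((2:ℂ) • ((dmat G)ᴴ * dmat G) - 1) * ((2:ℂ) • ((dmat G)ᴴ * dmat G) - 1)
      = 1 := by
    rw [Matrix.sub_mul, Matrix.smul_mul, hAC, Matrix.one_mul, two_smul]
    abel
  rw [groverU_eq G hd, Matrix.conjTranspose_mul, hCH, smat_conjTranspose,
    Matrix.mul_assoc, ← Matrix.mul_assoc (smat G), smat_mul_smat, Matrix.one_mul, hCC]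

/-- Real version of the symmetrized transition matrix. -/
noncomputable def mr : Matrix V V ℝ := fun u v =>
  if G.Adj u v then (Real.sqrt (G.degree u))⁻¹ * (Real.sqrt (G.degree v))⁻¹ else 0

/-- The diagonal matrix of square roots of degrees. -/
noncomputable def pdiag : Matrix V V ℝ := Matrix.diagonal (fun v => Real.sqrt (G.degree v))

lemma mr_mul_pdiag (hd : ∀ v, 0 < G.degree v) :
    mr G * pdiag G = pdiag G * transition G := by
  ext u v
  rw [pdiag, Matrix.mul_diagonal, Matrix.diagonal_mul]
  simp only [mr, transition]
  by_cases h : G.Adj u v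
  · rw [if_pos h, if_pos h]
    have hu : (0:ℝ) < Real.sqrt (G.degree u) := Real.sqrt_pos.mpr (by exact_mod_cast hd u)
    have hv : (0:ℝ) < Real.sqrt (G.degree v) := Real.sqrt_pos.mpr (by exact_mod_cast hd v)
    have hdu : (G.degree u : ℝ) = Real.sqrt (G.degree u) * Real.sqrt (G.degree u) :=
      (Real.mul_self_sqrt (by positivity)).symm
    have hu' : Real.sqrt (G.degree u : ℝ) ≠ 0 := ne_of_gt hu
    have hv' : Real.sqrt (G.degree v : ℝ) ≠ 0 := ne_of_gt hv
    have hdu0 : ((G.degree u : ℝ)) ≠ 0 := by exact_mod_cast (hd u).ne'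
    rw [mul_assoc, inv_mul_cancel₀ hv', mul_one, one_div]
    field_simp
    rw [Real.sq_sqrt (by positivity)]
  · simp [h]

lemma mr_map : (mr G).map Complex.ofRealHom = mmat G := by
  ext u v
  simp only [Matrix.map_apply, mr, mmat, aval, apply_ite]
  by_cases h : G.Adj u v <;> simp [h]

lemma eig_transition_iff (hd : ∀ v, 0 < G.degree v) (lam : ℝ) :
    (∃ φ, φ ≠ 0 ∧ transition G *ᵥ φ = lam • φ) ↔ ((lam : ℂ) • 1 - mmat G).det = 0 := by
  have h1 : (∃ φ, φ ≠ 0 ∧ transition G *ᵥ φ = lam • φ)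
      ↔ (lam • (1 : Matrix V V ℝ) - transition G).det = 0 := by
    rw [← Matrix.exists_mulVec_eq_zero_iff]
    constructor
    · rintro ⟨φ, hφ0, hφ⟩
      refine ⟨φ, hφ0, ?_⟩
      rw [Matrix.sub_mulVec, Matrix.smul_mulVec, Matrix.one_mulVec, hφ, sub_self]
    · rintro ⟨φ, hφ0, hφ⟩
      refine ⟨φ, hφ0, ?_⟩
      rw [Matrix.sub_mulVec, Matrix.smul_mulVec, Matrix.one_mulVec, sub_eq_zero] at hφ
      exact hφ.symm
  have key : (lam • (1 : Matrix V V ℝ) - mr G) * pdiag G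
      = pdiag G * (lam • (1 : Matrix V V ℝ) - transition G) := by
    rw [Matrix.sub_mul, Matrix.mul_sub, Matrix.smul_mul, Matrix.mul_smul, Matrix.one_mul,
      Matrix.mul_one, mr_mul_pdiag G hd]
  have hdetP : (pdiag G).det ≠ 0 := by
    rw [pdiag, Matrix.det_diagonal]
    refine Finset.prod_ne_zero_iff.mpr fun v _ => ?_
    exact ne_of_gt (Real.sqrt_pos.mpr (by exact_mod_cast hd v))
  have h2 : (lam • (1 : Matrix V V ℝ) - mr G).det
      = (lam • (1 : Matrix V V ℝ) - transition G).det := by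
    have := congrArg Matrix.det key
    rw [Matrix.det_mul, Matrix.det_mul] at this
    rw [mul_comm] at this
    exact mul_left_cancel₀ hdetP this
  have h3 : Complex.ofRealHom.mapMatrix (lam • (1 : Matrix V V ℝ) - mr G)
      = (lam : ℂ) • 1 - mmat G := by
    have h4 : ((lam • (1 : Matrix V V ℝ)).map Complex.ofRealHom)
        = (lam : ℂ) • (1 : Matrix V V ℂ) := by
      ext u v
      by_cases huv : u = v <;> simp [Matrix.map_apply, huv]
    rw [RingHom.mapMatrix_apply, Matrix.map_sub _ (fun a b => map_sub _ a b), mr_map, h4]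
  rw [h1, ← h2, ← h3, ← RingHom.map_det]
  simp

lemma pow_mulVec (A : Matrix (Arc G) (Arc G) ℂ) (mu : ℂ) (psi : Arc G → ℂ)
    (h : A *ᵥ psi = mu • psi) (k : ℕ) : (A ^ k) *ᵥ psi = mu ^ k • psi := by
  induction k with
  | zero => simp [Matrix.one_mulVec]
  | succ k ih =>
    rw [pow_succ, ← Matrix.mulVec_mulVec, h, Matrix.mulVec_smul, ih, smul_smul, pow_succ]
    ring_nf

lemma forward (hd : ∀ v, 0 < G.degree v) (hper : IsPeriodic G) (lam : ℝ)
    (hlam : ∃ φ, φ ≠ 0 ∧ transition G *ᵥ φ = lam • φ) :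
    ∃ q : ℚ, Real.arccos lam = (q : ℝ) * Real.pi := by
  rcases le_or_gt lam (-1) with hle | h1
  · exact ⟨1, by rw [Real.arccos_eq_pi.mpr hle]; norm_num⟩
  rcases le_or_gt 1 lam with hge | h2
  · exact ⟨0, by rw [Real.arccos_eq_zero.mpr hge]; norm_num⟩
  obtain ⟨k, hk, hUk⟩ := hper
  have hdet := (eig_transition_iff G hd lam).mp hlam
  obtain ⟨φ, hφ0, hφ⟩ := Matrix.exists_mulVec_eq_zero_iff.mpr hdet
  have hMφ : mmat G *ᵥ φ = (lam : ℂ) • φ := by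
    rw [Matrix.sub_mulVec, Matrix.smul_mulVec, Matrix.one_mulVec, sub_eq_zero] at hφ
    exact hφ.symm
  set θ := Real.arccos lam with hθ
  have hcos : Real.cos θ = lam := Real.cos_arccos h1.le h2.le
  set μ : ℂ := Complex.exp (θ * Complex.I) with hμ
  have hquad : μ ^ 2 - 2 * (lam : ℂ) * μ + 1 = 0 := by
    have h1' : μ * Complex.exp (-(θ : ℂ) * Complex.I) = 1 := by
      rw [hμ, ← Complex.exp_add]
      ring_nf
      exact Complex.exp_zero
    have h2' : μ + Complex.exp (-(θ : ℂ) * Complex.I) = 2 * (lam : ℂ) := by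
      have hc : Complex.cos (θ : ℂ) = ((lam : ℝ) : ℂ) := by
        rw [← Complex.ofReal_cos, hcos]
      rw [Complex.cos] at hc
      rw [hμ]
      have : ((θ:ℂ)) * Complex.I = (θ:ℂ) * Complex.I := rfl
      linear_combination 2 * hc
    linear_combination μ * h2' - h1'
  have hμsq : μ ^ 2 ≠ 1 := by
    intro hsq
    have him : μ.im = Real.sin θ := Complex.exp_ofReal_mul_I_im θ
    have hθpi : θ < Real.pi :=
      lt_of_le_of_ne (Real.arccos_le_pi lam) fun h => absurd (Real.arccos_eq_pi.mp h)
        (not_le.mpr h1)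
    have hsin : 0 < Real.sin θ :=
      Real.sin_pos_of_pos_of_lt_pi (Real.arccos_pos.mpr h2) hθpi
    have hz : (μ - 1) * (μ + 1) = 0 := by linear_combination hsq
    have him0 : μ.im = 0 := by
      rcases mul_eq_zero.mp hz with h6 | h6
      · have h7 : μ = 1 := by linear_combination h6
        rw [h7]; simp
      · have h7 : μ = -1 := by linear_combination h6
        rw [h7]; simp
    rw [him0] at him
    exact absurd him.symm (ne_of_gt hsin)
  set x := (dmat G)ᴴ *ᵥ φ with hx
  set y := smat G *ᵥ x with hy
  have hUx : groverU G *ᵥ x = y := by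
    rw [hx, Matrix.mulVec_mulVec, U_mul_dT G hd, ← Matrix.mulVec_mulVec]
  have hyφ : y = (smat G * (dmat G)ᴴ) *ᵥ φ := by
    rw [hy, hx, Matrix.mulVec_mulVec]
  have hUy : groverU G *ᵥ y = (2 * (lam : ℂ)) • y - x := by
    have e1 : groverU G *ᵥ y = (groverU G * (smat G * (dmat G)ᴴ)) *ᵥ φ := by
      rw [hyφ, Matrix.mulVec_mulVec]
    rw [e1, U_mul_SdT G hd, Matrix.sub_mulVec, Matrix.smul_mulVec,
      ← Matrix.mulVec_mulVec, hMφ, Matrix.mulVec_smul, ← hyφ, ← hx, smul_smul]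
  set ψ := x - μ • y with hψ
  have hψeig : groverU G *ᵥ ψ = μ • ψ := by
    rw [hψ, Matrix.mulVec_sub, Matrix.mulVec_smul, hUx, hUy]
    match_scalars
    · linear_combination hquad
    · ring
  have hψ0 : ψ ≠ 0 := by
    intro h0
    rw [hψ, sub_eq_zero] at h0
    have hyx : y = μ • x := by
      have e2 : smat G *ᵥ y = x := by
        rw [hy, Matrix.mulVec_mulVec, smat_mul_smat, Matrix.one_mulVec]
      calc y = smat G *ᵥ x := hy
      _ = smat G *ᵥ (μ • y) := by rw [← h0]
      _ = μ • (smat G *ᵥ y) := Matrix.mulVec_smul _ _ _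
      _ = μ • x := by rw [e2]
    have e3 : x = (μ ^ 2) • x := by
      calc x = μ • y := h0
      _ = μ • (μ • x) := by rw [hyx]
      _ = (μ ^ 2) • x := by rw [smul_smul, sq]
    have hx0 : x = 0 := by
      have h5 : ((μ ^ 2) - 1) • x = 0 := by
        rw [sub_smul, one_smul, ← e3, sub_self]
      rcases smul_eq_zero.mp h5 with h6 | h6
      · exact absurd (by linear_combination h6) hμsq
      · exact h6
    have e4 : dmat G *ᵥ x = φ := by
      rw [hx, Matrix.mulVec_mulVec, dmat_mul_conjTranspose G hd, Matrix.one_mulVec]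
    rw [hx0, Matrix.mulVec_zero] at e4
    exact hφ0 e4.symm
  have hpow := pow_mulVec G (groverU G) μ ψ hψeig k
  rw [hUk, Matrix.one_mulVec] at hpow
  obtain ⟨i, hi⟩ := Function.ne_iff.mp hψ0
  have hμk : μ ^ k = 1 := by
    have h8 := congrFun hpow i
    simp only [Pi.smul_apply, smul_eq_mul] at h8
    have h9 : μ ^ k * ψ i = 1 * ψ i := by rw [one_mul, ← h8]
    exact mul_right_cancel₀ hi h9
  have hexp1 : Complex.exp (((k * θ : ℝ) : ℂ) * Complex.I) = 1 := by
    rw [show (((k * θ : ℝ) : ℂ)) * Complex.I = (k : ℂ) * ((θ : ℂ) * Complex.I) by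
      push_cast; ring, Complex.exp_nat_mul]
    exact hμk
  obtain ⟨n, hn⟩ := Complex.exp_eq_one_iff.mp hexp1
  have hreal : (k * θ : ℝ) = n * (2 * Real.pi) := by
    have h9 : (((k * θ : ℝ)) : ℂ) = (((n : ℝ) * (2 * Real.pi) : ℝ) : ℂ) := by
      apply mul_right_cancel₀ Complex.I_ne_zero
      rw [hn]; push_cast; ring
    exact_mod_cast h9
  refine ⟨(2 * n) / (k : ℚ), ?_⟩
  have hk0 : (k : ℝ) ≠ 0 := Nat.cast_ne_zero.mpr hk.ne'
  push_cast
  rw [div_mul_eq_mul_div, eq_div_iff hk0]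
  push_cast at hreal
  linarith [hreal]

lemma eig_root_of_unity (hd : ∀ v, 0 < G.degree v)
    (hQ : ∀ lam : ℝ, (∃ φ, φ ≠ 0 ∧ transition G *ᵥ φ = lam • φ) →
      ∃ q : ℚ, Real.arccos lam = (q : ℝ) * Real.pi)
    (μ : ℂ) (ψ : Arc G → ℂ) (hψ0 : ψ ≠ 0) (heig : groverU G *ᵥ ψ = μ • ψ) :
    ∃ m : ℕ, 0 < m ∧ μ ^ m = 1 := by
  have hc0 : star ψ ⬝ᵥ ψ ≠ 0 := by
    obtain ⟨i, hi⟩ := Function.ne_iff.mp hψ0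
    have he : star ψ ⬝ᵥ ψ = ((∑ j, Complex.normSq (ψ j) : ℝ) : ℂ) := by
      rw [dotProduct]
      push_cast
      refine Finset.sum_congr rfl fun j _ => ?_
      rw [Pi.star_apply, Complex.star_def, ← Complex.normSq_eq_conj_mul_self]
    rw [he]
    have hpos : 0 < ∑ j, Complex.normSq (ψ j) :=
      Finset.sum_pos' (fun j _ => Complex.normSq_nonneg _)
        ⟨i, Finset.mem_univ i, Complex.normSq_pos.mpr hi⟩
    exact Complex.ofReal_ne_zero.mpr hpos.ne' 
  have hunit : (starRingEnd ℂ) μ * μ = 1 := by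
    have key : star (groverU G *ᵥ ψ) ⬝ᵥ (groverU G *ᵥ ψ) = star ψ ⬝ᵥ ψ := by
      rw [Matrix.star_mulVec, Matrix.dotProduct_mulVec, Matrix.vecMul_vecMul,
        unitaryU G hd, Matrix.vecMul_one]
    rw [heig] at key
    simp only [star_smul, smul_dotProduct, dotProduct_smul, smul_eq_mul] at key
    have key2 : ((starRingEnd ℂ) μ * μ) * (star ψ ⬝ᵥ ψ) = 1 * (star ψ ⬝ᵥ ψ) := by
      rw [one_mul]
      calc ((starRingEnd ℂ) μ * μ) * (star ψ ⬝ᵥ ψ)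
          = μ * (star μ * (star ψ ⬝ᵥ ψ)) := by rw [Complex.star_def]; ring
      _ = star ψ ⬝ᵥ ψ := key
    exact mul_right_cancel₀ hc0 key2
  have hμ0 : μ ≠ 0 := by
    intro h
    rw [h, mul_zero] at hunit
    exact zero_ne_one hunit
  by_cases hφ0 : dmat G *ᵥ ψ = 0
  · -- terminally null eigenvector: μ² = 1
    refine ⟨2, two_pos, ?_⟩
    have hC : ((2:ℂ) • ((dmat G)ᴴ * dmat G) - 1) *ᵥ ψ = -ψ := by
      rw [Matrix.sub_mulVec, Matrix.smul_mulVec, ← Matrix.mulVec_mulVec, hφ0,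
        Matrix.mulVec_zero, smul_zero, Matrix.one_mulVec, zero_sub]
    have hUψ : groverU G *ᵥ ψ = -(smat G *ᵥ ψ) := by
      rw [groverU_eq G hd, ← Matrix.mulVec_mulVec, hC, Matrix.mulVec_neg]
    rw [heig] at hUψ
    have hS : smat G *ᵥ ψ = -(μ • ψ) := neg_eq_iff_eq_neg.mp hUψ.symm
    have hSS : smat G *ᵥ (smat G *ᵥ ψ) = ψ := by
      rw [Matrix.mulVec_mulVec, smat_mul_smat, Matrix.one_mulVec]
    rw [hS, Matrix.mulVec_neg, Matrix.mulVec_smul, hS, smul_neg, neg_neg, smul_smul,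
      ← sq] at hSS
    have h7 : (μ ^ 2 - 1) • ψ = 0 := by
      rw [sub_smul, one_smul, hSS, sub_self]
    rcases smul_eq_zero.mp h7 with h8 | h8
    · exact sub_eq_zero.mp h8
    · exact absurd h8 hψ0
  · -- generic eigenvector
    obtain ⟨φ, hφdef⟩ : ∃ w, w = dmat G *ᵥ ψ := ⟨_, rfl⟩
    have hφne : φ ≠ 0 := by rw [hφdef]; exact hφ0
    have hCψ : ((2:ℂ) • ((dmat G)ᴴ * dmat G) - 1) *ᵥ ψ = μ • (smat G *ᵥ ψ) := by
      have h5 : smat G *ᵥ (groverU G *ᵥ ψ) = ((2:ℂ) • ((dmat G)ᴴ * dmat G) - 1) *ᵥ ψ := by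
        conv_lhs => rw [groverU_eq G hd]
        rw [Matrix.mulVec_mulVec, ← Matrix.mul_assoc, smat_mul_smat, Matrix.one_mul]
      rw [heig, Matrix.mulVec_smul] at h5
      exact h5.symm
    have hE1 : (2:ℂ) • ((dmat G)ᴴ *ᵥ φ) - ψ = μ • (smat G *ᵥ ψ) := by
      rw [hφdef, ← hCψ, Matrix.sub_mulVec, Matrix.smul_mulVec, ← Matrix.mulVec_mulVec,
        Matrix.one_mulVec]
    have homega : φ = μ • (omat G *ᵥ ψ) := by
      have h6 := congrArg (fun w => dmat G *ᵥ w) hE1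
      rw [Matrix.mulVec_sub, Matrix.mulVec_smul, Matrix.mulVec_smul, Matrix.mulVec_mulVec,
        dmat_mul_conjTranspose G hd, Matrix.one_mulVec, Matrix.mulVec_mulVec,
        dmat_mul_smat, ← hφdef] at h6
      rw [← h6, two_smul]
      abel
    have homega' : omat G *ᵥ ψ = μ⁻¹ • φ := by
      rw [homega, smul_smul, inv_mul_cancel₀ hμ0, one_smul]
    have hE2 : (2:ℂ) • (mmat G *ᵥ φ) - omat G *ᵥ ψ = μ • φ := by
      have s1 := congrArg (fun w => smat G *ᵥ w) hE1
      rw [Matrix.mulVec_sub, Matrix.mulVec_smul, Matrix.mulVec_smul, Matrix.mulVec_mulVec,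
        Matrix.mulVec_mulVec, smat_mul_smat, Matrix.one_mulVec] at s1
      have s2 := congrArg (fun w => dmat G *ᵥ w) s1
      rw [Matrix.mulVec_sub, Matrix.mulVec_smul, Matrix.mulVec_smul, Matrix.mulVec_mulVec,
        ← Matrix.mul_assoc, dmat_mul_smat, omat_mul_conjTranspose_dmat,
        Matrix.mulVec_mulVec, dmat_mul_smat, ← hφdef] at s2
      exact s2
    have hμinv : μ⁻¹ = (starRingEnd ℂ) μ :=
      inv_eq_of_mul_eq_one_right (by rw [mul_comm]; exact hunit)
    have hM : mmat G *ᵥ φ = ((μ.re : ℝ) : ℂ) • φ := by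
      have hadd : (2:ℂ) • (mmat G *ᵥ φ) = μ • φ + μ⁻¹ • φ := by
        have h9 := hE2
        rw [homega'] at h9
        rw [sub_eq_iff_eq_add] at h9
        rw [h9, add_comm]
      have hsum : μ + μ⁻¹ = ((2 * μ.re : ℝ) : ℂ) := by
        rw [hμinv, Complex.add_conj]
      have h10 : (2:ℂ) • (mmat G *ᵥ φ) = (2:ℂ) • (((μ.re : ℝ) : ℂ) • φ) := by
        rw [hadd, ← add_smul, hsum, smul_smul]
        congr 1
        push_cast
        ring
      exact smul_right_injective _ (two_ne_zero) h10
    have hdet0 : ((((μ.re : ℝ)) : ℂ) • 1 - mmat G).det = 0 := by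
      apply Matrix.exists_mulVec_eq_zero_iff.mp
      exact ⟨φ, hφne, by
        rw [Matrix.sub_mulVec, Matrix.smul_mulVec, Matrix.one_mulVec, hM, sub_self]⟩
    obtain ⟨q, hq⟩ := hQ μ.re ((eig_transition_iff G hd μ.re).mpr hdet0)
    have hnsq : μ.re ^ 2 + μ.im ^ 2 = 1 := by
      have h8 : ((Complex.normSq μ : ℝ) : ℂ) = 1 := by
        rw [Complex.normSq_eq_conj_mul_self]; exact hunit
      have h9 : Complex.normSq μ = 1 := by exact_mod_cast h8
      rw [Complex.normSq_apply] at h9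
      nlinarith [h9]
    have hre_le : μ.re ≤ 1 := by nlinarith [sq_nonneg μ.im]
    have hre_ge : -1 ≤ μ.re := by nlinarith [sq_nonneg μ.im]
    set θ := Real.arccos μ.re with hθdef
    have hcos : Real.cos θ = μ.re := Real.cos_arccos hre_ge hre_le
    have hsin : Real.sin θ = Real.sqrt (1 - μ.re ^ 2) := Real.sin_arccos μ.re
    set ν := Complex.exp ((θ : ℂ) * Complex.I) with hνdef
    have hνre : ν.re = μ.re := by rw [hνdef, Complex.exp_ofReal_mul_I_re, hcos]
    have hνim : ν.im = Real.sqrt (1 - μ.re ^ 2) := by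
      rw [hνdef, Complex.exp_ofReal_mul_I_im, hsin]
    have him2 : μ.im ^ 2 = 1 - μ.re ^ 2 := by linarith
    have hcase : μ = ν ∨ μ = (starRingEnd ℂ) ν := by
      rcases le_or_gt 0 μ.im with h | h
      · left
        apply Complex.ext
        · rw [hνre]
        · rw [hνim, ← him2, Real.sqrt_sq h]
      · right
        apply Complex.ext
        · rw [Complex.conj_re, hνre]
        · rw [Complex.conj_im, hνim, ← him2,
            show μ.im ^ 2 = (-μ.im) ^ 2 by ring, Real.sqrt_sq (by linarith)]
          ring
    have hνpow : ν ^ (2 * q.den) = 1 := by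
      rw [hνdef, ← Complex.exp_nat_mul, Complex.exp_eq_one_iff]
      refine ⟨q.num, ?_⟩
      have hden : ((q.den : ℝ)) * (q : ℝ) = (q.num : ℝ) := by
        rw [Rat.cast_def]
        field_simp
      have hcr : ((2 * q.den : ℕ) : ℝ) * θ = (q.num : ℝ) * (2 * Real.pi) := by
        push_cast
        rw [hq]
        linear_combination (2 * Real.pi) * hden
      have hcc := congrArg (fun r : ℝ => (r : ℂ) * Complex.I) hcr
      push_cast at hcc ⊢
      linear_combination hcc
    refine ⟨2 * q.den, by positivity, ?_⟩
    rcases hcase with h | h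
    · rw [h, hνpow]
    · rw [h, ← map_pow, hνpow]
      simp

lemma charpoly_eval (B : Matrix (Arc G) (Arc G) ℂ) (z : ℂ) :
    (Matrix.charpoly B).eval z = (z • 1 - B).det := by
  rw [Matrix.charpoly, ← Polynomial.coe_evalRingHom, RingHom.map_det]
  congr 1
  rw [RingHom.mapMatrix_apply]
  ext e f
  by_cases h : e = f
  · subst h
    simp [Matrix.charmatrix_apply_eq, Matrix.one_apply_eq]
  · simp [Matrix.charmatrix_apply_ne _ _ _ h, Matrix.one_apply_ne h]

lemma spec_iff_det (B : Matrix (Arc G) (Arc G) ℂ) (z : ℂ) :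
    z ∈ spectrum ℂ B ↔ (z • 1 - B).det = 0 := by
  rw [spectrum.mem_iff, Algebra.algebraMap_eq_smul_one, Matrix.isUnit_iff_isUnit_det,
    isUnit_iff_ne_zero, not_not]

lemma unitary_pow (B : Matrix (Arc G) (Arc G) ℂ) (h : Bᴴ * B = 1) (n : ℕ) :
    (B ^ n)ᴴ * B ^ n = 1 := by
  induction n with
  | zero => simp
  | succ n ih =>
    rw [pow_succ, Matrix.conjTranspose_mul]
    calc Bᴴ * (B ^ n)ᴴ * (B ^ n * B) = Bᴴ * ((B ^ n)ᴴ * B ^ n) * B := by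
          simp only [Matrix.mul_assoc]
    _ = 1 := by rw [ih, Matrix.mul_one, h]

lemma unitary_trace_eq (B : Matrix (Arc G) (Arc G) ℂ) (h1 : Bᴴ * B = 1)
    (h2 : B.trace = (Fintype.card (Arc G) : ℂ)) : B = 1 := by
  have hnn : ∀ i j : Arc G, 0 ≤ Complex.normSq (B i j) := fun i j => Complex.normSq_nonneg _
  have hcol : ∀ j, ∑ i, Complex.normSq (B i j) = 1 := by
    intro j
    have h3 := congrFun (congrFun h1 j) j
    rw [Matrix.mul_apply] at h3
    have h4 : ∀ i : Arc G, (Bᴴ) j i * B i j = ((Complex.normSq (B i j) : ℝ) : ℂ) := by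
      intro i
      rw [Matrix.conjTranspose_apply, Complex.star_def, ← Complex.normSq_eq_conj_mul_self]
    rw [Finset.sum_congr rfl fun i _ => h4 i, Matrix.one_apply_eq] at h3
    exact_mod_cast h3
  have hle : ∀ j, Complex.normSq (B j j) ≤ 1 := by
    intro j
    rw [← hcol j]
    exact Finset.single_le_sum (fun i _ => hnn i j) (Finset.mem_univ j)
  have hdle : ∀ j, (B j j).re ≤ 1 := by
    intro j
    have h5 := hle j
    rw [Complex.normSq_apply] at h5
    nlinarith [sq_nonneg ((B j j).im), sq_nonneg ((B j j).re - 1), sq_nonneg ((B j j).re + 1)]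
  have hsumre : ∑ j, (B j j).re = (Fintype.card (Arc G) : ℝ) := by
    have h5 := congrArg Complex.re h2
    rw [Matrix.trace] at h5
    rw [Complex.re_sum] at h5
    simpa using h5
  have hd1 : ∀ j, (B j j).re = 1 := by
    by_contra hcon
    push_neg at hcon
    obtain ⟨j0, hj0⟩ := hcon
    have hlt : ∑ j, (B j j).re < ∑ _j : Arc G, (1 : ℝ) :=
      Finset.sum_lt_sum (fun i _ => hdle i)
        ⟨j0, Finset.mem_univ _, lt_of_le_of_ne (hdle j0) hj0⟩
    rw [hsumre, Finset.sum_const, Finset.card_univ, nsmul_eq_mul, mul_one] at hlt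
    exact lt_irrefl _ hlt
  have hdiagB : ∀ j, B j j = 1 := by
    intro j
    have h6 := hle j
    rw [Complex.normSq_apply] at h6
    apply Complex.ext
    · rw [hd1 j, Complex.one_re]
    · rw [Complex.one_im]
      nlinarith [hd1 j]
  have hoff : ∀ i j, i ≠ j → B i j = 0 := by
    intro i j hij
    have h8 : Complex.normSq (B j j) + ∑ x ∈ Finset.univ.erase j, Complex.normSq (B x j)
        = ∑ x, Complex.normSq (B x j) := Finset.add_sum_erase Finset.univ (fun i => Complex.normSq (B i j))
      (Finset.mem_univ j)
    rw [hcol j, hdiagB j] at h8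
    simp only [Complex.normSq_one] at h8
    have h9 : ∑ x ∈ Finset.univ.erase j, Complex.normSq (B x j) = 0 := by linarith
    exact Complex.normSq_eq_zero.mp
      ((Finset.sum_eq_zero_iff_of_nonneg (fun i _ => hnn i j)).mp h9 i
        (Finset.mem_erase.mpr ⟨hij, Finset.mem_univ _⟩))
  ext i j
  by_cases h : i = j
  · subst h
    rw [hdiagB, Matrix.one_apply_eq]
  · rw [hoff i j h, Matrix.one_apply_ne h]

lemma backward (hd : ∀ v, 0 < G.degree v)
    (hQ : ∀ lam : ℝ, (∃ φ, φ ≠ 0 ∧ transition G *ᵥ φ = lam • φ) →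
      ∃ q : ℚ, Real.arccos lam = (q : ℝ) * Real.pi) : IsPeriodic G := by
  have hroots : ∀ μ ∈ spectrum ℂ (groverU G), ∃ m : ℕ, 0 < m ∧ μ ^ m = 1 := by
    intro μ hμ
    have hdet : (μ • 1 - groverU G).det = 0 := (spec_iff_det G _ μ).mp hμ
    obtain ⟨ψ, hψ0, hψ⟩ := Matrix.exists_mulVec_eq_zero_iff.mpr hdet
    have heig : groverU G *ᵥ ψ = μ • ψ := by
      rw [Matrix.sub_mulVec, Matrix.smul_mulVec, Matrix.one_mulVec, sub_eq_zero] at hψ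
      exact hψ.symm
    exact eig_root_of_unity G hd hQ μ ψ hψ0 heig
  have hchoice : ∀ μ : ℂ, ∃ m : ℕ, 0 < m ∧ (μ ∈ spectrum ℂ (groverU G) → μ ^ m = 1) := by
    intro μ
    by_cases h : μ ∈ spectrum ℂ (groverU G)
    · obtain ⟨m, hm, h1⟩ := hroots μ h
      exact ⟨m, hm, fun _ => h1⟩
    · exact ⟨1, one_pos, fun hc => absurd hc h⟩
  choose m hm0 hm1 using hchoice
  have hN0 : 0 < ∏ μ ∈ (Matrix.charpoly (groverU G)).roots.toFinset, m μ :=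
    Finset.prod_pos fun μ _ => hm0 μ
  set N : ℕ := ∏ μ ∈ (Matrix.charpoly (groverU G)).roots.toFinset, m μ with hNdef
  have hspec_mem_R : ∀ μ ∈ spectrum ℂ (groverU G),
      μ ∈ (Matrix.charpoly (groverU G)).roots.toFinset := by
    intro μ hμ
    rw [Multiset.mem_toFinset, Polynomial.mem_roots']
    refine ⟨(Matrix.charpoly_monic _).ne_zero, ?_⟩
    rw [Polynomial.IsRoot.def, charpoly_eval]
    exact (spec_iff_det G _ μ).mp hμ
  have hpowN : ∀ μ ∈ spectrum ℂ (groverU G), μ ^ N = 1 := by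
    intro μ hμ
    obtain ⟨c, hc⟩ := Finset.dvd_prod_of_mem m (hspec_mem_R μ hμ)
    rw [show N = m μ * c from hc, pow_mul, hm1 μ hμ, one_pow]
  refine ⟨N, hN0, ?_⟩
  apply unitary_trace_eq G _ (unitary_pow G _ (unitaryU G hd) N)
  have hspecN : ∀ z ∈ spectrum ℂ (groverU G ^ N), z = 1 := by
    intro z hz
    rw [spectrum.map_pow_of_pos (groverU G) hN0] at hz
    obtain ⟨μ, hμ, rfl⟩ := hz
    exact hpowN μ hμ
  have hallroots : ∀ z ∈ (Matrix.charpoly (groverU G ^ N)).roots, z = 1 := by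
    intro z hz
    apply hspecN
    rw [spec_iff_det, ← charpoly_eval]
    exact (Polynomial.mem_roots'.mp hz).2
  have hcard : Multiset.card (Matrix.charpoly (groverU G ^ N)).roots
      = Fintype.card (Arc G) := by
    have hs := Polynomial.splits_iff_card_roots.mp
      (IsAlgClosed.splits (Matrix.charpoly (groverU G ^ N)))
    rw [hs, Matrix.charpoly_natDegree_eq_dim]
  have hrep : (Matrix.charpoly (groverU G ^ N)).roots
      = Multiset.replicate (Fintype.card (Arc G)) (1 : ℂ) := by
    rw [Multiset.eq_replicate]
    exact ⟨hcard, hallroots⟩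
  rw [Matrix.trace_eq_sum_roots_charpoly, hrep, Multiset.sum_replicate]
  simp

lemma degree_pos_of_arc (hconn : G.Connected) (e0 : Arc G) (v : V) : 0 < G.degree v := by
  rw [SimpleGraph.degree_pos_iff_exists_adj]
  by_cases h : v = e0.val.1
  · exact ⟨e0.val.2, h ▸ e0.prop⟩
  · obtain ⟨p⟩ := hconn.preconnected v e0.val.1
    cases p with
    | nil => exact absurd rfl h
    | cons hadj _ => exact ⟨_, hadj⟩

end Aux

/-- A finite simple connected graph is periodic if and only if `arccos λ` is
a rational multiple of `π` for every eigenvalue `λ` of its transition matrix. -/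
theorem periodic_iff_arccos_rat {V : Type*} [Fintype V] [DecidableEq V] (G : SimpleGraph V)
    (hconn : G.Connected) :
    IsPeriodic G ↔
      ∀ lam ∈ spectrum ℝ (transition G), ∃ q : ℚ, Real.arccos lam = (q : ℝ) * Real.pi := by
  rcases isEmpty_or_nonempty (Arc G) with hemp | hne
  · constructor
    · intro _ lam hlam
      have htriv : transition G = 0 := by
        ext u v
        simp only [transition, Matrix.zero_apply]
        rw [if_neg (fun hadj => hemp.false ⟨(u, v), hadj⟩)]
      rw [htriv] at hlam
      have hlam0 : lam = 0 := by
        rw [spectrum.mem_iff] at hlam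
        by_contra h0
        apply hlam
        rw [sub_zero]
        exact (isUnit_iff_ne_zero.mpr h0).map (algebraMap ℝ (Matrix V V ℝ))
      rw [hlam0, Real.arccos_zero]
      exact ⟨1/2, by push_cast; ring⟩
    · intro _
      refine ⟨1, one_pos, ?_⟩
      have hall : ∀ (A B : Matrix (Arc G) (Arc G) ℂ), A = B := by
        intro A B
        ext e f
        exact (hemp.false e).elim
      exact hall _ _
  · obtain ⟨e0⟩ := hne
    have hd : ∀ v, 0 < G.degree v := Aux.degree_pos_of_arc G hconn e0
    constructor
    · intro hper lam hlam
      apply Aux.forward G hd hper lam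
      have hdet : (lam • (1 : Matrix V V ℝ) - transition G).det = 0 := by
        rw [spectrum.mem_iff, Algebra.algebraMap_eq_smul_one, Matrix.isUnit_iff_isUnit_det,
          isUnit_iff_ne_zero, not_not] at hlam
        exact hlam
      obtain ⟨φ, hφ0, hφ⟩ := Matrix.exists_mulVec_eq_zero_iff.mpr hdet
      refine ⟨φ, hφ0, ?_⟩
      rw [Matrix.sub_mulVec, Matrix.smul_mulVec, Matrix.one_mulVec, sub_eq_zero] at hφ
      exact hφ.symm
    · intro hQ
      apply Aux.backward G hd
      intro lam hex
      apply hQ lam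
      obtain ⟨φ, hφ0, hφ⟩ := hex
      rw [spectrum.mem_iff, Algebra.algebraMap_eq_smul_one, Matrix.isUnit_iff_isUnit_det,
        isUnit_iff_ne_zero, not_not]
      apply Matrix.exists_mulVec_eq_zero_iff.mp
      exact ⟨φ, hφ0, by
        rw [Matrix.sub_mulVec, Matrix.smul_mulVec, Matrix.one_mulVec, hφ, sub_self]⟩

end GroverPaper
end

section
/- For every odd k ≥ 3 and every r ≥ 2, the graph G(k,r) is not odd-periodic: if G(k,r) is periodic, then its period is even (indeed a multiple of 4(r−1)). -/
open Matrix

attribute [local instance] Classical.propDecidable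

namespace GroverPaper

variable {V : Type*}

/-- Vertex set of the graph `G(k,r)`: the cycle part and two path parts. -/
abbrev GkrVertex (k r : ℕ) : Type := ZMod k ⊕ (Fin (r - 1) ⊕ Fin (r - 1))

/-- The graph `G(k,r)` obtained by identifying one vertex of the cycle `C_k` with one endpoint
of each of two disjoint paths on `r` vertices. Here `Sum.inl x` are the cycle vertices
(`Sum.inl 0` being the identified vertex `u`), and `Sum.inr (Sum.inl j)` (resp.
`Sum.inr (Sum.inr j)`) is the `(j+1)`-st vertex of the first (resp. second) path. -/
def Gkr (k r : ℕ) : SimpleGraph (GkrVertex k r) :=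
  SimpleGraph.fromRel fun a b =>
    match a, b with
    | Sum.inl x, Sum.inl y => y = x + 1
    | Sum.inl x, Sum.inr (Sum.inl j) => x = 0 ∧ (j : ℕ) = 0
    | Sum.inl x, Sum.inr (Sum.inr j) => x = 0 ∧ (j : ℕ) = 0
    | Sum.inr (Sum.inl i), Sum.inr (Sum.inl j) => (j : ℕ) = (i : ℕ) + 1
    | Sum.inr (Sum.inr i), Sum.inr (Sum.inr j) => (j : ℕ) = (i : ℕ) + 1
    | _, _ => False

/-! ### Auxiliary material for the proof -/

section Auxiliary

lemma fin_sum_ite {M : Type*} [AddCommMonoid M] {s : ℕ} (c : ℕ) (F : Fin s → M) :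
    ∑ j : Fin s, (if (j : ℕ) = c then F j else 0)
      = if h : c < s then F ⟨c, h⟩ else 0 := by
  by_cases h : c < s
  · rw [dif_pos h, Finset.sum_eq_single ⟨c, h⟩]
    · simp
    · intro b _ hb
      exact if_neg fun hbc => hb (Fin.ext hbc)
    · intro hmem; exact absurd (Finset.mem_univ _) hmem
  · rw [dif_neg h]
    refine Finset.sum_eq_zero fun j _ => ?_
    rw [if_neg]
    intro hj
    exact h (hj ▸ j.isLt)

lemma ite_ite_split {P Q : Prop} [Decidable P] [Decidable Q] {M : Type*} [AddCommMonoid M]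
    (h : ¬ (P ∧ Q)) (a b : M) :
    (if P then a else if Q then b else 0) = (if P then a else 0) + (if Q then b else 0) := by
  split_ifs with h1 h2 h2
  · exact absurd ⟨h1, h2⟩ h
  · rw [add_zero]
  · rw [zero_add]
  · rw [add_zero]

lemma arc_indicator [Fintype V] (G : SimpleGraph V) (p : V × V) (c : ℂ) :
    ∑ f : Arc G, (if f.val = p then c else 0) = if G.Adj p.1 p.2 then c else 0 := by
  by_cases h : G.Adj p.1 p.2
  · rw [if_pos h]
    rw [Finset.sum_eq_single (⟨p, h⟩ : Arc G)]
    · simp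
    · intro b _ hb
      exact if_neg fun hbc => hb (Subtype.ext hbc)
    · intro hmem; exact absurd (Finset.mem_univ _) hmem
  · rw [if_neg h]
    refine Finset.sum_eq_zero fun f _ => ?_
    rw [if_neg]
    intro hf
    exact h (hf ▸ f.prop)

lemma arc_sum_fiber [Fintype V] (G : SimpleGraph V) (Ψ : V → V → ℂ)
    (h0 : ∀ a b, ¬ G.Adj a b → Ψ a b = 0) (v0 : V) :
    ∑ f : Arc G, (if f.val.2 = v0 then Ψ f.val.1 f.val.2 else 0) = ∑ w : V, Ψ w v0 := by
  have step1 : ∀ f : Arc G, (if f.val.2 = v0 then Ψ f.val.1 f.val.2 else 0)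
      = ∑ w : V, (if f.val = (w, v0) then Ψ w v0 else 0) := by
    intro f
    by_cases h : f.val.2 = v0
    · rw [if_pos h]
      rw [Finset.sum_eq_single f.val.1]
      · rw [if_pos]
        · rw [h]
        · exact Prod.ext rfl h
      · intro b _ hb
        exact if_neg fun hbc => hb (congrArg Prod.fst hbc).symm
      · intro hmem; exact absurd (Finset.mem_univ _) hmem
    · rw [if_neg h]
      symm
      refine Finset.sum_eq_zero fun w _ => ?_
      exact if_neg fun hw => h (congrArg Prod.snd hw)
  calc ∑ f : Arc G, (if f.val.2 = v0 then Ψ f.val.1 f.val.2 else 0)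
      = ∑ f : Arc G, ∑ w : V, (if f.val = (w, v0) then Ψ w v0 else 0) :=
        Finset.sum_congr rfl fun f _ => step1 f
    _ = ∑ w : V, ∑ f : Arc G, (if f.val = (w, v0) then Ψ w v0 else 0) := Finset.sum_comm
    _ = ∑ w : V, (if G.Adj w v0 then Ψ w v0 else 0) :=
        Finset.sum_congr rfl fun w _ => arc_indicator G (w, v0) (Ψ w v0)
    _ = ∑ w : V, Ψ w v0 := by
        refine Finset.sum_congr rfl fun w _ => ?_
        by_cases h : G.Adj w v0
        · rw [if_pos h]
        · rw [if_neg h, h0 _ _ h]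

/-- Structural formula for a row of the Grover walk applied to a vector. -/
lemma grover_mulVec [Fintype V] (G : SimpleGraph V) (Ψ : V → V → ℂ)
    (h0 : ∀ a b, ¬ G.Adj a b → Ψ a b = 0) (e : Arc G) :
    (groverU G).mulVec (fun f => Ψ f.val.1 f.val.2) e
      = (2 / (G.degree e.val.1 : ℂ)) * (∑ w : V, Ψ w e.val.1) - Ψ e.val.2 e.val.1 := by
  classical
  have key : ∀ f : Arc G, groverU G e f * Ψ f.val.1 f.val.2
      = (2 / (G.degree e.val.1 : ℂ)) * (if f.val.2 = e.val.1 then Ψ f.val.1 f.val.2 else 0)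
        - (if f = (⟨(e.val.2, e.val.1), e.prop.symm⟩ : Arc G) then Ψ f.val.1 f.val.2 else 0) := by
    intro f
    unfold groverU
    by_cases h1 : f.val.2 = e.val.1
    · rw [if_pos h1, if_pos h1]
      by_cases h2 : e.val = (f.val.2, f.val.1)
      · rw [if_pos h2, if_pos, h1]
        · ring
        · apply Subtype.ext
          exact Prod.ext (congrArg Prod.snd h2).symm (congrArg Prod.fst h2).symm
      · have hne : f ≠ (⟨(e.val.2, e.val.1), e.prop.symm⟩ : Arc G) := by
          intro hf
          apply h2
          have := congrArg Subtype.val hf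
          exact Prod.ext (by rw [h1]) (by rw [congrArg Prod.fst this])
        rw [if_neg h2, if_neg hne, h1]
        ring
    · rw [if_neg h1, if_neg h1, if_neg]
      · ring
      · intro hf
        apply h1
        rw [hf]
  unfold Matrix.mulVec dotProduct
  calc ∑ f : Arc G, groverU G e f * Ψ f.val.1 f.val.2
      = ∑ f : Arc G, ((2 / (G.degree e.val.1 : ℂ)) * (if f.val.2 = e.val.1 then Ψ f.val.1 f.val.2 else 0)
        - (if f = (⟨(e.val.2, e.val.1), e.prop.symm⟩ : Arc G) then Ψ f.val.1 f.val.2 else 0)) :=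
        Finset.sum_congr rfl fun f _ => key f
    _ = (2 / (G.degree e.val.1 : ℂ)) * (∑ f : Arc G, (if f.val.2 = e.val.1 then Ψ f.val.1 f.val.2 else 0))
        - ∑ f : Arc G, (if f = (⟨(e.val.2, e.val.1), e.prop.symm⟩ : Arc G) then Ψ f.val.1 f.val.2 else 0) := by
        rw [Finset.sum_sub_distrib, Finset.mul_sum]
    _ = (2 / (G.degree e.val.1 : ℂ)) * (∑ w : V, Ψ w e.val.1) - Ψ e.val.2 e.val.1 := by
        rw [arc_sum_fiber G Ψ h0]
        congr 1
        rw [Finset.sum_ite_eq' Finset.univ]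
        simp

/-- The eigenvector of `groverU (Gkr k r)`, as a function of (origin, terminus). -/
noncomputable def Psi (k r : ℕ) (l : ℂ) : GkrVertex k r → GkrVertex k r → ℂ
  | Sum.inl _, Sum.inl _ => 0
  | Sum.inl x, Sum.inr (Sum.inl i) => if x = 0 ∧ (i : ℕ) = 0 then l ^ (r - 2) else 0
  | Sum.inl x, Sum.inr (Sum.inr i) => if x = 0 ∧ (i : ℕ) = 0 then -l ^ (r - 2) else 0
  | Sum.inr (Sum.inl i), Sum.inl x => if x = 0 ∧ (i : ℕ) = 0 then -l ^ (r - 1) else 0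
  | Sum.inr (Sum.inr i), Sum.inl x => if x = 0 ∧ (i : ℕ) = 0 then l ^ (r - 1) else 0
  | Sum.inr (Sum.inl i), Sum.inr (Sum.inl j) =>
      if (j : ℕ) = (i : ℕ) + 1 then l ^ (r - 2 - (j : ℕ))
      else if (i : ℕ) = (j : ℕ) + 1 then -l ^ (r - 1 + (i : ℕ)) else 0
  | Sum.inr (Sum.inr i), Sum.inr (Sum.inr j) =>
      if (j : ℕ) = (i : ℕ) + 1 then -l ^ (r - 2 - (j : ℕ))
      else if (i : ℕ) = (j : ℕ) + 1 then l ^ (r - 1 + (i : ℕ)) else 0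
  | Sum.inr (Sum.inl _), Sum.inr (Sum.inr _) => 0
  | Sum.inr (Sum.inr _), Sum.inr (Sum.inl _) => 0

section GkrLemmas
variable (k r : ℕ)

lemma adj_inl_inrl (x : ZMod k) (i : Fin (r-1)) :
    (Gkr k r).Adj (Sum.inl x) (Sum.inr (Sum.inl i)) ↔ x = 0 ∧ (i : ℕ) = 0 := by
  simp [Gkr, SimpleGraph.fromRel_adj]

lemma adj_inl_inrr (x : ZMod k) (i : Fin (r-1)) :
    (Gkr k r).Adj (Sum.inl x) (Sum.inr (Sum.inr i)) ↔ x = 0 ∧ (i : ℕ) = 0 := by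
  simp [Gkr, SimpleGraph.fromRel_adj]

lemma adj_inrl_inrl (i j : Fin (r-1)) :
    (Gkr k r).Adj (Sum.inr (Sum.inl i)) (Sum.inr (Sum.inl j))
      ↔ ((j : ℕ) = (i : ℕ) + 1 ∨ (i : ℕ) = (j : ℕ) + 1) := by
  rw [Gkr, SimpleGraph.fromRel_adj]
  constructor
  · rintro ⟨-, h | h⟩
    · exact Or.inl h
    · exact Or.inr h
  · intro h
    refine ⟨?_, by tauto⟩
    rintro heq
    injection heq with heq'
    injection heq' with heq''
    rw [heq''] at h
    omega

lemma adj_inrr_inrr (i j : Fin (r-1)) :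
    (Gkr k r).Adj (Sum.inr (Sum.inr i)) (Sum.inr (Sum.inr j))
      ↔ ((j : ℕ) = (i : ℕ) + 1 ∨ (i : ℕ) = (j : ℕ) + 1) := by
  rw [Gkr, SimpleGraph.fromRel_adj]
  constructor
  · rintro ⟨-, h | h⟩
    · exact Or.inl h
    · exact Or.inr h
  · intro h
    refine ⟨?_, by tauto⟩
    rintro heq
    injection heq with heq'
    injection heq' with heq''
    rw [heq''] at h
    omega

lemma adj_inrl_inrr (i j : Fin (r-1)) :
    ¬ (Gkr k r).Adj (Sum.inr (Sum.inl i)) (Sum.inr (Sum.inr j)) := by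
  simp [Gkr, SimpleGraph.fromRel_adj]

lemma Psi_not_adj (l : ℂ) :
    ∀ a b, ¬ (Gkr k r).Adj a b → Psi k r l a b = 0 := by
  rintro (x | i | i) (y | j | j) hnadj
  · rfl
  · exact if_neg fun h => hnadj ((adj_inl_inrl k r x j).mpr h)
  · exact if_neg fun h => hnadj ((adj_inl_inrr k r x j).mpr h)
  · exact if_neg fun h => hnadj (((adj_inl_inrl k r y i).mpr h).symm)
  · have hor := fun h => hnadj ((adj_inrl_inrl k r i j).mpr h)
    show (if (j:ℕ) = (i:ℕ) + 1 then l ^ (r - 2 - (j:ℕ))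
        else if (i:ℕ) = (j:ℕ) + 1 then -l ^ (r - 1 + (i:ℕ)) else 0) = 0
    rw [if_neg fun h => hor (Or.inl h), if_neg fun h => hor (Or.inr h)]
  · rfl
  · exact if_neg fun h => hnadj (((adj_inl_inrr k r y i).mpr h).symm)
  · rfl
  · have hor := fun h => hnadj ((adj_inrr_inrr k r i j).mpr h)
    show (if (j:ℕ) = (i:ℕ) + 1 then -l ^ (r - 2 - (j:ℕ))
        else if (i:ℕ) = (j:ℕ) + 1 then l ^ (r - 1 + (i:ℕ)) else 0) = 0
    rw [if_neg fun h => hor (Or.inl h), if_neg fun h => hor (Or.inr h)]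

variable [NeZero k] (l : ℂ)

lemma sum_zmod_ite {M : Type*} [AddCommMonoid M] (c : M) (P : Prop) [Decidable P] :
    ∑ x : ZMod k, (if x = 0 ∧ P then c else 0) = if P then c else 0 := by
  by_cases hP : P
  · rw [if_pos hP]
    simp only [hP, and_true]
    rw [Finset.sum_ite_eq' Finset.univ (0 : ZMod k) (fun _ => c)]
    simp
  · rw [if_neg hP]
    exact Finset.sum_eq_zero fun x _ => if_neg (fun h => hP h.2)

lemma S_inl (hr : 2 ≤ r) (x : ZMod k) :
    ∑ w : GkrVertex k r, Psi k r l w (Sum.inl x) = 0 := by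
  rw [Fintype.sum_sum_type, Fintype.sum_sum_type]
  have h1 : ∑ y : ZMod k, Psi k r l (Sum.inl y) (Sum.inl x) = 0 :=
    Finset.sum_eq_zero fun y _ => rfl
  have h2 : ∑ i : Fin (r-1), Psi k r l (Sum.inr (Sum.inl i)) (Sum.inl x)
      = if x = 0 then -l ^ (r-1) else 0 := by
    show ∑ i : Fin (r-1), (if x = 0 ∧ (i:ℕ) = 0 then -l ^ (r-1) else 0) = _
    calc ∑ i : Fin (r-1), (if x = 0 ∧ (i:ℕ) = 0 then -l ^ (r-1) else 0)
        = ∑ i : Fin (r-1), (if (i:ℕ) = 0 then (if x = 0 then -l ^ (r-1) else 0) else 0) := by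
          refine Finset.sum_congr rfl fun i _ => ?_
          split_ifs <;> tauto
      _ = if h : 0 < r - 1 then (if x = 0 then -l ^ (r-1) else 0) else 0 :=
          fin_sum_ite 0 _
      _ = if x = 0 then -l ^ (r-1) else 0 := by rw [dif_pos (by omega)]
  have h3 : ∑ i : Fin (r-1), Psi k r l (Sum.inr (Sum.inr i)) (Sum.inl x)
      = if x = 0 then l ^ (r-1) else 0 := by
    show ∑ i : Fin (r-1), (if x = 0 ∧ (i:ℕ) = 0 then l ^ (r-1) else 0) = _
    calc ∑ i : Fin (r-1), (if x = 0 ∧ (i:ℕ) = 0 then l ^ (r-1) else 0)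
        = ∑ i : Fin (r-1), (if (i:ℕ) = 0 then (if x = 0 then l ^ (r-1) else 0) else 0) := by
          refine Finset.sum_congr rfl fun i _ => ?_
          split_ifs <;> tauto
      _ = if h : 0 < r - 1 then (if x = 0 then l ^ (r-1) else 0) else 0 :=
          fin_sum_ite 0 _
      _ = if x = 0 then l ^ (r-1) else 0 := by rw [dif_pos (by omega)]
  rw [h1, h2, h3]
  split_ifs <;> ring

lemma S_pathA (hr : 2 ≤ r) (j : Fin (r-1)) :
    ∑ w : GkrVertex k r, Psi k r l w (Sum.inr (Sum.inl j))
      = l ^ (r - 2 - (j:ℕ)) - (if (j:ℕ) + 1 < r - 1 then l ^ (r + (j:ℕ)) else 0) := by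
  rw [Fintype.sum_sum_type, Fintype.sum_sum_type]
  have h1 : ∑ x : ZMod k, Psi k r l (Sum.inl x) (Sum.inr (Sum.inl j))
      = if (j:ℕ) = 0 then l ^ (r-2) else 0 :=
    sum_zmod_ite k (l ^ (r-2)) ((j:ℕ) = 0)
  have h3 : ∑ i : Fin (r-1), Psi k r l (Sum.inr (Sum.inr i)) (Sum.inr (Sum.inl j)) = 0 :=
    Finset.sum_eq_zero fun i _ => rfl
  have h2 : ∑ i : Fin (r-1), Psi k r l (Sum.inr (Sum.inl i)) (Sum.inr (Sum.inl j))
      = (if 1 ≤ (j:ℕ) then l ^ (r - 2 - (j:ℕ)) else 0)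
        - (if (j:ℕ) + 1 < r - 1 then l ^ (r + (j:ℕ)) else 0) := by
    have expand : ∀ i : Fin (r-1), Psi k r l (Sum.inr (Sum.inl i)) (Sum.inr (Sum.inl j))
        = (if (i:ℕ) = (j:ℕ) - 1 ∧ 1 ≤ (j:ℕ) then l ^ (r - 2 - (j:ℕ)) else 0)
          + (if (i:ℕ) = (j:ℕ) + 1 then -l ^ (r - 1 + (i:ℕ)) else 0) := by
      intro i
      show (if (j:ℕ) = (i:ℕ) + 1 then l ^ (r - 2 - (j:ℕ))
          else if (i:ℕ) = (j:ℕ) + 1 then -l ^ (r - 1 + (i:ℕ)) else 0) = _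
      have hiff : ((j:ℕ) = (i:ℕ) + 1) ↔ ((i:ℕ) = (j:ℕ) - 1 ∧ 1 ≤ (j:ℕ)) := by omega
      rw [ite_ite_split (by omega)]
      simp only [hiff]
    rw [Finset.sum_congr rfl fun i _ => expand i, Finset.sum_add_distrib]
    have e1 : ∑ i : Fin (r-1), (if (i:ℕ) = (j:ℕ) - 1 ∧ 1 ≤ (j:ℕ) then l ^ (r - 2 - (j:ℕ)) else 0)
        = if 1 ≤ (j:ℕ) then l ^ (r - 2 - (j:ℕ)) else 0 := by
      calc ∑ i : Fin (r-1), (if (i:ℕ) = (j:ℕ) - 1 ∧ 1 ≤ (j:ℕ) then l ^ (r - 2 - (j:ℕ)) else 0)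
          = ∑ i : Fin (r-1), (if (i:ℕ) = (j:ℕ) - 1 then (if 1 ≤ (j:ℕ) then l ^ (r - 2 - (j:ℕ)) else 0) else 0) := by
            refine Finset.sum_congr rfl fun i _ => ?_
            split_ifs <;> tauto
        _ = if h : (j:ℕ) - 1 < r - 1 then (if 1 ≤ (j:ℕ) then l ^ (r - 2 - (j:ℕ)) else 0) else 0 :=
            fin_sum_ite _ _
        _ = if 1 ≤ (j:ℕ) then l ^ (r - 2 - (j:ℕ)) else 0 := by
            rw [dif_pos (by omega : (j:ℕ) - 1 < r - 1)]
    have e2 : ∑ i : Fin (r-1), (if (i:ℕ) = (j:ℕ) + 1 then -l ^ (r - 1 + (i:ℕ)) else 0)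
        = -(if (j:ℕ) + 1 < r - 1 then l ^ (r + (j:ℕ)) else 0) := by
      rw [fin_sum_ite ((j:ℕ)+1) (fun i => -l ^ (r - 1 + (i:ℕ)))]
      by_cases h : (j:ℕ) + 1 < r - 1
      · rw [dif_pos h, if_pos h]
        show -l ^ (r - 1 + ((j:ℕ)+1)) = -l ^ (r + (j:ℕ))
        congr 2
        omega
      · rw [dif_neg h, if_neg h, neg_zero]
    rw [e1, e2]
    ring
  rw [h1, h2, h3, add_zero]
  by_cases hj : (j:ℕ) = 0
  · rw [if_pos hj, if_neg (by omega : ¬ 1 ≤ (j:ℕ))]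
    have : r - 2 - (j:ℕ) = r - 2 := by omega
    rw [this]
    ring
  · rw [if_neg hj, if_pos (by omega : 1 ≤ (j:ℕ))]
    ring

lemma S_pathB (hr : 2 ≤ r) (j : Fin (r-1)) :
    ∑ w : GkrVertex k r, Psi k r l w (Sum.inr (Sum.inr j))
      = -l ^ (r - 2 - (j:ℕ)) + (if (j:ℕ) + 1 < r - 1 then l ^ (r + (j:ℕ)) else 0) := by
  rw [Fintype.sum_sum_type, Fintype.sum_sum_type]
  have h1 : ∑ x : ZMod k, Psi k r l (Sum.inl x) (Sum.inr (Sum.inr j))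
      = if (j:ℕ) = 0 then -l ^ (r-2) else 0 :=
    sum_zmod_ite k (-l ^ (r-2)) ((j:ℕ) = 0)
  have h3 : ∑ i : Fin (r-1), Psi k r l (Sum.inr (Sum.inl i)) (Sum.inr (Sum.inr j)) = 0 :=
    Finset.sum_eq_zero fun i _ => rfl
  have h2 : ∑ i : Fin (r-1), Psi k r l (Sum.inr (Sum.inr i)) (Sum.inr (Sum.inr j))
      = (if 1 ≤ (j:ℕ) then -l ^ (r - 2 - (j:ℕ)) else 0)
        + (if (j:ℕ) + 1 < r - 1 then l ^ (r + (j:ℕ)) else 0) := by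
    have expand : ∀ i : Fin (r-1), Psi k r l (Sum.inr (Sum.inr i)) (Sum.inr (Sum.inr j))
        = (if (i:ℕ) = (j:ℕ) - 1 ∧ 1 ≤ (j:ℕ) then -l ^ (r - 2 - (j:ℕ)) else 0)
          + (if (i:ℕ) = (j:ℕ) + 1 then l ^ (r - 1 + (i:ℕ)) else 0) := by
      intro i
      show (if (j:ℕ) = (i:ℕ) + 1 then -l ^ (r - 2 - (j:ℕ))
          else if (i:ℕ) = (j:ℕ) + 1 then l ^ (r - 1 + (i:ℕ)) else 0) = _
      have hiff : ((j:ℕ) = (i:ℕ) + 1) ↔ ((i:ℕ) = (j:ℕ) - 1 ∧ 1 ≤ (j:ℕ)) := by omega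
      rw [ite_ite_split (by omega)]
      simp only [hiff]
    rw [Finset.sum_congr rfl fun i _ => expand i, Finset.sum_add_distrib]
    have e1 : ∑ i : Fin (r-1), (if (i:ℕ) = (j:ℕ) - 1 ∧ 1 ≤ (j:ℕ) then -l ^ (r - 2 - (j:ℕ)) else 0)
        = if 1 ≤ (j:ℕ) then -l ^ (r - 2 - (j:ℕ)) else 0 := by
      calc ∑ i : Fin (r-1), (if (i:ℕ) = (j:ℕ) - 1 ∧ 1 ≤ (j:ℕ) then -l ^ (r - 2 - (j:ℕ)) else 0)
          = ∑ i : Fin (r-1), (if (i:ℕ) = (j:ℕ) - 1 then (if 1 ≤ (j:ℕ) then -l ^ (r - 2 - (j:ℕ)) else 0) else 0) := by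
            refine Finset.sum_congr rfl fun i _ => ?_
            split_ifs <;> tauto
        _ = if h : (j:ℕ) - 1 < r - 1 then (if 1 ≤ (j:ℕ) then -l ^ (r - 2 - (j:ℕ)) else 0) else 0 :=
            fin_sum_ite _ _
        _ = if 1 ≤ (j:ℕ) then -l ^ (r - 2 - (j:ℕ)) else 0 := by
            rw [dif_pos (by omega : (j:ℕ) - 1 < r - 1)]
    have e2 : ∑ i : Fin (r-1), (if (i:ℕ) = (j:ℕ) + 1 then l ^ (r - 1 + (i:ℕ)) else 0)
        = (if (j:ℕ) + 1 < r - 1 then l ^ (r + (j:ℕ)) else 0) := by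
      rw [fin_sum_ite ((j:ℕ)+1) (fun i => l ^ (r - 1 + (i:ℕ)))]
      by_cases h : (j:ℕ) + 1 < r - 1
      · rw [dif_pos h, if_pos h]
        show l ^ (r - 1 + ((j:ℕ)+1)) = l ^ (r + (j:ℕ))
        congr 1
        omega
      · rw [dif_neg h, if_neg h]
    rw [e1, e2]
  rw [h1, h2, h3]
  by_cases hj : (j:ℕ) = 0
  · rw [if_pos hj, if_neg (by omega : ¬ 1 ≤ (j:ℕ))]
    have : r - 2 - (j:ℕ) = r - 2 := by omega
    rw [this]
    ring
  · rw [if_neg hj, if_pos (by omega : 1 ≤ (j:ℕ))]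
    ring

lemma degree_pathA (hr : 2 ≤ r) (i : Fin (r-1)) :
    (Gkr k r).degree (Sum.inr (Sum.inl i)) = if (i:ℕ) + 1 < r - 1 then 2 else 1 := by
  classical
  rw [SimpleGraph.degree, SimpleGraph.neighborFinset_eq_filter, Finset.card_filter]
  rw [Fintype.sum_sum_type, Fintype.sum_sum_type]
  have h1 : ∑ x : ZMod k, (if (Gkr k r).Adj (Sum.inr (Sum.inl i)) (Sum.inl x) then 1 else 0)
      = if (i:ℕ) = 0 then 1 else 0 := by
    have : ∀ x : ZMod k, (if (Gkr k r).Adj (Sum.inr (Sum.inl i)) (Sum.inl x) then (1:ℕ) else 0)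
        = (if x = 0 ∧ (i:ℕ) = 0 then 1 else 0) := by
      intro x
      congr 1
      apply propext
      rw [SimpleGraph.adj_comm]
      exact adj_inl_inrl k r x i
    rw [Finset.sum_congr rfl fun x _ => this x]
    exact sum_zmod_ite k 1 ((i:ℕ) = 0)
  have h2 : ∑ j : Fin (r-1), (if (Gkr k r).Adj (Sum.inr (Sum.inl i)) (Sum.inr (Sum.inl j)) then 1 else 0)
      = (if (i:ℕ) + 1 < r - 1 then 1 else 0) + (if 1 ≤ (i:ℕ) then 1 else 0) := by
    have expand : ∀ j : Fin (r-1), (if (Gkr k r).Adj (Sum.inr (Sum.inl i)) (Sum.inr (Sum.inl j)) then (1:ℕ) else 0)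
        = (if (j:ℕ) = (i:ℕ) + 1 then 1 else 0) + (if (j:ℕ) = (i:ℕ) - 1 ∧ 1 ≤ (i:ℕ) then 1 else 0) := by
      intro j
      have hadj := adj_inrl_inrl k r i j
      by_cases hf : (j:ℕ) = (i:ℕ) + 1
      · rw [if_pos (hadj.mpr (Or.inl hf)), if_pos hf, if_neg (by omega)]
      · by_cases hb : (j:ℕ) = (i:ℕ) - 1 ∧ 1 ≤ (i:ℕ)
        · rw [if_pos (hadj.mpr (Or.inr (by omega))), if_neg hf, if_pos hb]
        · rw [if_neg, if_neg hf, if_neg hb]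
          intro hA
          rcases hadj.mp hA with h | h
          · exact hf h
          · exact hb (by omega)
    rw [Finset.sum_congr rfl fun j _ => expand j, Finset.sum_add_distrib]
    congr 1
    · rw [fin_sum_ite ((i:ℕ)+1) (fun _ => (1:ℕ))]
      by_cases h : (i:ℕ) + 1 < r - 1
      · rw [dif_pos h, if_pos h]
      · rw [dif_neg h, if_neg h]
    · calc ∑ j : Fin (r-1), (if (j:ℕ) = (i:ℕ) - 1 ∧ 1 ≤ (i:ℕ) then (1:ℕ) else 0)
          = ∑ j : Fin (r-1), (if (j:ℕ) = (i:ℕ) - 1 then (if 1 ≤ (i:ℕ) then (1:ℕ) else 0) else 0) := by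
            refine Finset.sum_congr rfl fun j _ => ?_
            split_ifs <;> tauto
        _ = if h : (i:ℕ) - 1 < r - 1 then (if 1 ≤ (i:ℕ) then (1:ℕ) else 0) else 0 :=
            fin_sum_ite _ _
        _ = if 1 ≤ (i:ℕ) then 1 else 0 := by
            rw [dif_pos (by have := i.isLt; omega : (i:ℕ) - 1 < r - 1)]
  have h3 : ∑ j : Fin (r-1), (if (Gkr k r).Adj (Sum.inr (Sum.inl i)) (Sum.inr (Sum.inr j)) then 1 else 0)
      = 0 :=
    Finset.sum_eq_zero fun j _ => if_neg (adj_inrl_inrr k r i j)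
  rw [h1, h2, h3, add_zero]
  have := i.isLt
  split_ifs <;> omega

lemma degree_pathB (hr : 2 ≤ r) (i : Fin (r-1)) :
    (Gkr k r).degree (Sum.inr (Sum.inr i)) = if (i:ℕ) + 1 < r - 1 then 2 else 1 := by
  classical
  rw [SimpleGraph.degree, SimpleGraph.neighborFinset_eq_filter, Finset.card_filter]
  rw [Fintype.sum_sum_type, Fintype.sum_sum_type]
  have h1 : ∑ x : ZMod k, (if (Gkr k r).Adj (Sum.inr (Sum.inr i)) (Sum.inl x) then 1 else 0)
      = if (i:ℕ) = 0 then 1 else 0 := by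
    have : ∀ x : ZMod k, (if (Gkr k r).Adj (Sum.inr (Sum.inr i)) (Sum.inl x) then (1:ℕ) else 0)
        = (if x = 0 ∧ (i:ℕ) = 0 then 1 else 0) := by
      intro x
      congr 1
      apply propext
      rw [SimpleGraph.adj_comm]
      exact adj_inl_inrr k r x i
    rw [Finset.sum_congr rfl fun x _ => this x]
    exact sum_zmod_ite k 1 ((i:ℕ) = 0)
  have h2 : ∑ j : Fin (r-1), (if (Gkr k r).Adj (Sum.inr (Sum.inr i)) (Sum.inr (Sum.inr j)) then 1 else 0)
      = (if (i:ℕ) + 1 < r - 1 then 1 else 0) + (if 1 ≤ (i:ℕ) then 1 else 0) := by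
    have expand : ∀ j : Fin (r-1), (if (Gkr k r).Adj (Sum.inr (Sum.inr i)) (Sum.inr (Sum.inr j)) then (1:ℕ) else 0)
        = (if (j:ℕ) = (i:ℕ) + 1 then 1 else 0) + (if (j:ℕ) = (i:ℕ) - 1 ∧ 1 ≤ (i:ℕ) then 1 else 0) := by
      intro j
      have hadj := adj_inrr_inrr k r i j
      by_cases hf : (j:ℕ) = (i:ℕ) + 1
      · rw [if_pos (hadj.mpr (Or.inl hf)), if_pos hf, if_neg (by omega)]
      · by_cases hb : (j:ℕ) = (i:ℕ) - 1 ∧ 1 ≤ (i:ℕ)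
        · rw [if_pos (hadj.mpr (Or.inr (by omega))), if_neg hf, if_pos hb]
        · rw [if_neg, if_neg hf, if_neg hb]
          intro hA
          rcases hadj.mp hA with h | h
          · exact hf h
          · exact hb (by omega)
    rw [Finset.sum_congr rfl fun j _ => expand j, Finset.sum_add_distrib]
    congr 1
    · rw [fin_sum_ite ((i:ℕ)+1) (fun _ => (1:ℕ))]
      by_cases h : (i:ℕ) + 1 < r - 1
      · rw [dif_pos h, if_pos h]
      · rw [dif_neg h, if_neg h]
    · calc ∑ j : Fin (r-1), (if (j:ℕ) = (i:ℕ) - 1 ∧ 1 ≤ (i:ℕ) then (1:ℕ) else 0)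
          = ∑ j : Fin (r-1), (if (j:ℕ) = (i:ℕ) - 1 then (if 1 ≤ (i:ℕ) then (1:ℕ) else 0) else 0) := by
            refine Finset.sum_congr rfl fun j _ => ?_
            split_ifs <;> tauto
        _ = if h : (i:ℕ) - 1 < r - 1 then (if 1 ≤ (i:ℕ) then (1:ℕ) else 0) else 0 :=
            fin_sum_ite _ _
        _ = if 1 ≤ (i:ℕ) then 1 else 0 := by
            rw [dif_pos (by have := i.isLt; omega : (i:ℕ) - 1 < r - 1)]
  have h3 : ∑ j : Fin (r-1), (if (Gkr k r).Adj (Sum.inr (Sum.inr i)) (Sum.inr (Sum.inl j)) then 1 else 0)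
      = 0 := by
    refine Finset.sum_eq_zero fun j _ => if_neg ?_
    intro hA
    exact adj_inrl_inrr k r j i hA.symm
  rw [h1, h3, h2]
  have := i.isLt
  split_ifs <;> omega

/-- The key eigenvector equation. -/
lemma eigen_eq (hr : 2 ≤ r) (hl : l ^ (2*(r-1)) = -1) (e : Arc (Gkr k r)) :
    (groverU (Gkr k r)).mulVec (fun f => Psi k r l f.val.1 f.val.2) e
      = l * Psi k r l e.val.1 e.val.2 := by
  rw [grover_mulVec (Gkr k r) (Psi k r l) (Psi_not_adj k r l) e]
  obtain ⟨⟨a, b⟩, hab⟩ := e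
  dsimp only
  have hc2 : (((2:ℕ)) : ℂ) = 2 := by norm_num
  have hc1 : (((1:ℕ)) : ℂ) = 1 := by norm_num
  rcases a with x | i | i <;> rcases b with y | j | j
  · -- cycle → cycle
    rw [S_inl k r l hr x]
    show 2 / (((Gkr k r).degree (Sum.inl x) : ℕ) : ℂ) * 0 - 0 = l * 0
    ring
  · -- u → path A
    obtain ⟨hx, hj⟩ := (adj_inl_inrl k r x j).mp hab
    rw [S_inl k r l hr x]
    show 2 / (((Gkr k r).degree (Sum.inl x) : ℕ) : ℂ) * 0
        - (if x = 0 ∧ (j:ℕ) = 0 then -l ^ (r-1) else 0)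
      = l * (if x = 0 ∧ (j:ℕ) = 0 then l ^ (r-2) else 0)
    rw [if_pos ⟨hx, hj⟩, if_pos ⟨hx, hj⟩]
    have h2 : l * l ^ (r-2) = l ^ (r-1) := by
      rw [← pow_succ']
      congr 1
      omega
    rw [h2]
    ring
  · -- u → path B
    obtain ⟨hx, hj⟩ := (adj_inl_inrr k r x j).mp hab
    rw [S_inl k r l hr x]
    show 2 / (((Gkr k r).degree (Sum.inl x) : ℕ) : ℂ) * 0
        - (if x = 0 ∧ (j:ℕ) = 0 then l ^ (r-1) else 0)
      = l * (if x = 0 ∧ (j:ℕ) = 0 then -l ^ (r-2) else 0)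
    rw [if_pos ⟨hx, hj⟩, if_pos ⟨hx, hj⟩]
    have h2 : l * l ^ (r-2) = l ^ (r-1) := by
      rw [← pow_succ']
      congr 1
      omega
    rw [mul_neg, h2]
    ring
  · -- path A → u
    obtain ⟨hy, hi⟩ := (adj_inl_inrl k r y i).mp hab.symm
    rw [S_pathA k r l hr i, degree_pathA k r hr i]
    show 2 / (((if (i:ℕ) + 1 < r - 1 then 2 else 1 : ℕ)) : ℂ)
          * (l ^ (r - 2 - (i:ℕ)) - (if (i:ℕ) + 1 < r - 1 then l ^ (r + (i:ℕ)) else 0))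
        - (if y = 0 ∧ (i:ℕ) = 0 then l ^ (r-2) else 0)
      = l * (if y = 0 ∧ (i:ℕ) = 0 then -l ^ (r-1) else 0)
    rw [if_pos (show y = 0 ∧ (i:ℕ) = 0 from ⟨hy, hi⟩),
      if_pos (show y = 0 ∧ (i:ℕ) = 0 from ⟨hy, hi⟩)]
    have hE0 : r - 2 - (i:ℕ) = r - 2 := by omega
    rw [hE0]
    by_cases hcase : (i:ℕ) + 1 < r - 1
    · rw [if_pos hcase, if_pos hcase, hc2]
      have h3 : l ^ (r + (i:ℕ)) = l * l ^ (r - 1 + (i:ℕ)) := by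
        rw [← pow_succ']
        congr 1
        omega
      have h4 : l ^ (r - 1 + (i:ℕ)) = l ^ (r-1) := by rw [hi, Nat.add_zero]
      rw [h3, h4]
      ring
    · -- leaf : r = 2
      rw [if_neg hcase, if_neg hcase, hc1]
      have hr2 : r = 2 := by omega
      subst hr2
      norm_num
      have hl' : l ^ 2 = -1 := by
        have : 2 * (2 - 1) = 2 := rfl
        rwa [this] at hl
      linear_combination hl'
  · -- path A → path A
    have hor := (adj_inrl_inrl k r i j).mp hab
    rw [S_pathA k r l hr i, degree_pathA k r hr i]
    show 2 / (((if (i:ℕ) + 1 < r - 1 then 2 else 1 : ℕ)) : ℂ)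
          * (l ^ (r - 2 - (i:ℕ)) - (if (i:ℕ) + 1 < r - 1 then l ^ (r + (i:ℕ)) else 0))
        - (if (i:ℕ) = (j:ℕ) + 1 then l ^ (r - 2 - (i:ℕ))
            else if (j:ℕ) = (i:ℕ) + 1 then -l ^ (r - 1 + (j:ℕ)) else 0)
      = l * (if (j:ℕ) = (i:ℕ) + 1 then l ^ (r - 2 - (j:ℕ))
            else if (i:ℕ) = (j:ℕ) + 1 then -l ^ (r - 1 + (i:ℕ)) else 0)
    rcases hor with hj | hi
    · -- forward arc
      have hij : (i:ℕ) + 1 < r - 1 := by have := j.isLt; omega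
      rw [if_pos hij, if_pos hij, if_neg (by omega), if_pos hj, if_pos hj, hc2]
      have h1 : r - 1 + (j:ℕ) = r + (i:ℕ) := by omega
      have h2 : l * l ^ (r - 2 - (j:ℕ)) = l ^ (r - 2 - (i:ℕ)) := by
        rw [← pow_succ']
        congr 1
        have := j.isLt
        omega
      rw [h1, h2]
      ring
    · -- backward arc
      by_cases hcase : (i:ℕ) + 1 < r - 1
      · rw [if_pos hcase, if_pos hcase, if_pos hi, if_neg (by omega), if_pos hi, hc2]
        have h2 : l * l ^ (r - 1 + (i:ℕ)) = l ^ (r + (i:ℕ)) := by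
          rw [← pow_succ']
          congr 1
          omega
        rw [mul_neg, h2]
        ring
      · -- leaf arc
        rw [if_neg hcase, if_neg hcase, if_pos hi, if_neg (by omega), if_pos hi, hc1]
        have h0' : r - 2 - (i:ℕ) = 0 := by have := i.isLt; omega
        have h2 : l * l ^ (r - 1 + (i:ℕ)) = -1 := by
          rw [← pow_succ']
          have : r - 1 + (i:ℕ) + 1 = 2 * (r - 1) := by have := i.isLt; omega
          rw [this, hl]
        rw [h0', pow_zero, mul_neg, h2]
        norm_num
  · -- path A → path B : impossible
    exact absurd hab (adj_inrl_inrr k r i j)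
  · -- path B → u
    obtain ⟨hy, hi⟩ := (adj_inl_inrr k r y i).mp hab.symm
    rw [S_pathB k r l hr i, degree_pathB k r hr i]
    show 2 / (((if (i:ℕ) + 1 < r - 1 then 2 else 1 : ℕ)) : ℂ)
          * (-l ^ (r - 2 - (i:ℕ)) + (if (i:ℕ) + 1 < r - 1 then l ^ (r + (i:ℕ)) else 0))
        - (if y = 0 ∧ (i:ℕ) = 0 then -l ^ (r-2) else 0)
      = l * (if y = 0 ∧ (i:ℕ) = 0 then l ^ (r-1) else 0)
    rw [if_pos (show y = 0 ∧ (i:ℕ) = 0 from ⟨hy, hi⟩),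
      if_pos (show y = 0 ∧ (i:ℕ) = 0 from ⟨hy, hi⟩)]
    have hE0 : r - 2 - (i:ℕ) = r - 2 := by omega
    rw [hE0]
    by_cases hcase : (i:ℕ) + 1 < r - 1
    · rw [if_pos hcase, if_pos hcase, hc2]
      have h3 : l ^ (r + (i:ℕ)) = l * l ^ (r - 1 + (i:ℕ)) := by
        rw [← pow_succ']
        congr 1
        omega
      have h4 : l ^ (r - 1 + (i:ℕ)) = l ^ (r-1) := by rw [hi, Nat.add_zero]
      rw [h3, h4]
      ring
    · rw [if_neg hcase, if_neg hcase, hc1]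
      have hr2 : r = 2 := by omega
      subst hr2
      norm_num
      have hl' : l ^ 2 = -1 := by
        have : 2 * (2 - 1) = 2 := rfl
        rwa [this] at hl
      linear_combination -hl'
  · -- path B → path A : impossible
    exact absurd hab.symm (adj_inrl_inrr k r j i)
  · -- path B → path B
    have hor := (adj_inrr_inrr k r i j).mp hab
    rw [S_pathB k r l hr i, degree_pathB k r hr i]
    show 2 / (((if (i:ℕ) + 1 < r - 1 then 2 else 1 : ℕ)) : ℂ)
          * (-l ^ (r - 2 - (i:ℕ)) + (if (i:ℕ) + 1 < r - 1 then l ^ (r + (i:ℕ)) else 0))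
        - (if (i:ℕ) = (j:ℕ) + 1 then -l ^ (r - 2 - (i:ℕ))
            else if (j:ℕ) = (i:ℕ) + 1 then l ^ (r - 1 + (j:ℕ)) else 0)
      = l * (if (j:ℕ) = (i:ℕ) + 1 then -l ^ (r - 2 - (j:ℕ))
            else if (i:ℕ) = (j:ℕ) + 1 then l ^ (r - 1 + (i:ℕ)) else 0)
    rcases hor with hj | hi
    · have hij : (i:ℕ) + 1 < r - 1 := by have := j.isLt; omega
      rw [if_pos hij, if_pos hij, if_neg (by omega), if_pos hj, if_pos hj, hc2]
      have h1 : r - 1 + (j:ℕ) = r + (i:ℕ) := by omega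
      have h2 : l * l ^ (r - 2 - (j:ℕ)) = l ^ (r - 2 - (i:ℕ)) := by
        rw [← pow_succ']
        congr 1
        have := j.isLt
        omega
      rw [h1, mul_neg, h2]
      ring
    · by_cases hcase : (i:ℕ) + 1 < r - 1
      · rw [if_pos hcase, if_pos hcase, if_pos hi, if_neg (by omega), if_pos hi, hc2]
        have h2 : l * l ^ (r - 1 + (i:ℕ)) = l ^ (r + (i:ℕ)) := by
          rw [← pow_succ']
          congr 1
          omega
        rw [h2]
        ring
      · rw [if_neg hcase, if_neg hcase, if_pos hi, if_neg (by omega), if_pos hi, hc1]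
        have h0' : r - 2 - (i:ℕ) = 0 := by have := i.isLt; omega
        have h2 : l * l ^ (r - 1 + (i:ℕ)) = -1 := by
          rw [← pow_succ']
          have : r - 1 + (i:ℕ) + 1 = 2 * (r - 1) := by have := i.isLt; omega
          rw [this, hl]
        rw [h0', pow_zero, h2]
        norm_num

end GkrLemmas

/-- If the Grover walk admits an eigenvector whose eigenvalue only has powers equal to `1`
in multiples of `d`, then the period (if the graph is periodic) is divisible by `d`. -/
lemma dvd_period_of_eigen [Fintype V] (G : SimpleGraph V) (l : ℂ) (ψ : Arc G → ℂ)
    (e0 : Arc G) (hne : ψ e0 ≠ 0)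
    (heig : (groverU G).mulVec ψ = l • ψ)
    (d : ℕ) (hd : ∀ n : ℕ, l ^ n = 1 → d ∣ n)
    (hP : IsPeriodic G) : d ∣ period G := by
  have hpow : ∀ m : ℕ, ((groverU G) ^ m).mulVec ψ = l ^ m • ψ := by
    intro m
    induction m with
    | zero => rw [pow_zero, pow_zero, Matrix.one_mulVec, one_smul]
    | succ m ih =>
        rw [pow_succ, ← Matrix.mulVec_mulVec, heig, Matrix.mulVec_smul, ih, smul_smul,
          ← pow_succ']
  have hdvd : ∀ m : ℕ, groverU G ^ m = 1 → d ∣ m := by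
    intro m hU
    have h1 : l ^ m • ψ = ψ := by
      rw [← hpow m, hU, Matrix.one_mulVec]
    have h2 : l ^ m * ψ e0 = ψ e0 := by
      have := congrFun h1 e0
      simpa [Pi.smul_apply, smul_eq_mul] using this
    have h4 : l ^ m = 1 := by
      have h5 : l ^ m * ψ e0 = 1 * ψ e0 := by rw [one_mul, h2]
      exact mul_right_cancel₀ hne h5
    exact hd m h4
  have hper : period G = sInf {m : ℕ | 0 < m ∧ groverU G ^ m = 1} := rfl
  have hne' : {m : ℕ | 0 < m ∧ groverU G ^ m = 1}.Nonempty := by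
    obtain ⟨m, hm⟩ := hP
    exact ⟨m, by simp only [Set.mem_setOf_eq]; exact hm⟩
  have hmem := Nat.sInf_mem hne'
  simp only [Set.mem_setOf_eq] at hmem
  rw [hper]
  exact hdvd _ hmem.2

end Auxiliary

/-- For every odd `k ≥ 3` and every `r ≥ 2`, the graph `G(k,r)` is not
odd-periodic; indeed, if it is periodic then its period is even, and a multiple of
`4(r-1)`. -/
theorem Gkr_not_oddPeriodic (k r : ℕ) [NeZero k] (hk3 : 3 ≤ k) (hkodd : Odd k) (hr : 2 ≤ r) :
    ¬ IsOddPeriodic (Gkr k r) ∧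
      (IsPeriodic (Gkr k r) →
        Even (period (Gkr k r)) ∧ 4 * (r - 1) ∣ period (Gkr k r)) := by
  have hs : 1 ≤ r - 1 := by omega
  set l : ℂ := Complex.exp (2 * Real.pi * Complex.I / ((4 * (r-1) : ℕ) : ℂ)) with hldef
  have hprim : IsPrimitiveRoot l (4 * (r-1)) :=
    Complex.isPrimitiveRoot_exp (4 * (r-1)) (by omega)
  have hl0 : l ≠ 0 := Complex.exp_ne_zero _
  have hl2 : l ^ (2*(r-1)) = -1 := by
    have hsq : (l ^ (2*(r-1))) * (l ^ (2*(r-1))) = 1 := by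
      rw [← pow_add]
      have : 2*(r-1) + 2*(r-1) = 4*(r-1) := by omega
      rw [this]
      exact hprim.pow_eq_one
    rcases mul_self_eq_one_iff.mp hsq with h | h
    · exfalso
      exact hprim.pow_ne_one_of_pos_of_lt (by omega) (by omega) h
    · exact h
  have hadj : (Gkr k r).Adj (Sum.inl 0) (Sum.inr (Sum.inl ⟨0, hs⟩)) :=
    (adj_inl_inrl k r 0 ⟨0, hs⟩).mpr ⟨rfl, rfl⟩
  have hne0 : Psi k r l (Sum.inl 0) (Sum.inr (Sum.inl ⟨0, hs⟩)) ≠ 0 := by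
    show (if (0:ZMod k) = 0 ∧ ((⟨0, hs⟩ : Fin (r-1)):ℕ) = 0 then l ^ (r - 2) else 0) ≠ 0
    rw [if_pos ⟨rfl, rfl⟩]
    exact pow_ne_zero _ hl0
  have heig : (groverU (Gkr k r)).mulVec (fun f => Psi k r l f.val.1 f.val.2)
      = l • (fun f : Arc (Gkr k r) => Psi k r l f.val.1 f.val.2) := by
    funext e
    rw [eigen_eq k r l hr hl2 e]
    rfl
  have hd : ∀ n : ℕ, l ^ n = 1 → 4 * (r-1) ∣ n := fun n hn =>
    (hprim.pow_eq_one_iff_dvd n).mp hn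
  have main : IsPeriodic (Gkr k r) →
      Even (period (Gkr k r)) ∧ 4 * (r - 1) ∣ period (Gkr k r) := by
    intro hP
    have hdper : 4 * (r-1) ∣ period (Gkr k r) :=
      dvd_period_of_eigen (Gkr k r) l (fun f => Psi k r l f.val.1 f.val.2)
        ⟨(Sum.inl 0, Sum.inr (Sum.inl ⟨0, hs⟩)), hadj⟩ hne0 heig (4*(r-1)) hd hP
    refine ⟨?_, hdper⟩
    have h2 : (2:ℕ) ∣ 4 * (r-1) := ⟨2 * (r-1), by ring⟩
    exact even_iff_two_dvd.mpr (dvd_trans h2 hdper)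
  refine ⟨?_, main⟩
  rintro ⟨hP, hodd⟩
  exact (Nat.not_odd_iff_even.mpr (main hP).1) hodd

end GroverPaper
end

section
/- Let k ≥ 3 be odd, let G ∈ 𝒪(k) have n vertices and unique cycle vertices u_0, u_1, …, u_{k−1}, and let ρ_j be the coefficients of det(xI_n − T) where T is the transition matrix of G. Then ρ_{n−k} = −2 · Π_{i=0}^{k−1} (1/deg(u_i)). -/
open Matrix

attribute [local instance] Classical.propDecidable

namespace GroverPaper

variable {V : Type*}

section Helpers
open SimpleGraph Finset Equiv Polynomial

variable {V : Type*} [Fintype V] [DecidableEq V]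

lemma chainReach (H : SimpleGraph V) (f : ℕ → V) :
    ∀ ℓ : ℕ, 1 ≤ ℓ → (∀ m, 1 ≤ m → m < ℓ → H.Adj (f m) (f (m + 1))) →
      H.Reachable (f 1) (f ℓ) := by
  intro ℓ
  induction ℓ with
  | zero => omega
  | succ ℓ ih =>
    intro h1 hadj
    rcases Nat.lt_or_ge 1 (ℓ + 1) with h | h
    · have hℓ : 1 ≤ ℓ := by omega
      exact (ih hℓ fun m hm hm' => hadj m hm (by omega)).trans
        (hadj ℓ hℓ (by omega)).reachable
    · have : ℓ = 0 := by omega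
      subst this
      rfl

lemma connected_deleteEdges (G : SimpleGraph V) (hconn : G.Connected) (s : Set (Sym2 V))
    (h : ∀ e ∈ s, ∀ a b : V, s(a, b) = e → (G.deleteEdges s).Reachable a b) :
    (G.deleteEdges s).Connected := by
  have key : ∀ {x y : V}, G.Adj x y → (G.deleteEdges s).Reachable x y := by
    intro x y hxy
    by_cases hmem : s(x, y) ∈ s
    · exact h _ hmem x y rfl
    · exact (SimpleGraph.deleteEdges_adj.mpr ⟨hxy, hmem⟩).reachable
  have hne : Nonempty V := hconn.nonempty
  refine ⟨fun x y => ?_⟩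
  have hxy : G.Reachable x y := hconn.preconnected x y
  obtain ⟨p⟩ := hxy
  induction p with
  | nil => rfl
  | cons hadj q ih => exact (key hadj).trans ih

lemma card_le_ncard_edgeSet (G : SimpleGraph V) (hconn : G.Connected) :
    Fintype.card V ≤ G.edgeSet.ncard + 1 := by
  obtain ⟨r⟩ := hconn.nonempty
  have key : ∀ v : V, v ≠ r → ∃ w, G.Adj v w ∧ G.dist w r + 1 = G.dist v r := by
    intro v hv
    obtain ⟨p, hp⟩ := hconn.exists_walk_length_eq_dist v r
    cases p with
    | nil => exact absurd rfl hv
    | @cons _ w _ hadj q =>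
      refine ⟨w, hadj, ?_⟩
      have h1 : G.dist w r ≤ q.length := SimpleGraph.dist_le q
      obtain ⟨q', hq'⟩ := hconn.exists_walk_length_eq_dist w r
      have h2 : G.dist v r ≤ G.dist w r + 1 := by
        have := SimpleGraph.dist_le (SimpleGraph.Walk.cons hadj q')
        simpa [hq'] using this
      simp only [SimpleGraph.Walk.length_cons] at hp
      omega
  choose par hpadj hpdist using key
  have hcc : G.edgeSet.ncard = G.edgeSet.toFinset.card := Set.ncard_eq_toFinset_card' _
  rw [hcc, ← Finset.card_univ, ← Finset.card_erase_add_one (Finset.mem_univ r)]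
  have : (Finset.univ.erase r).card ≤ G.edgeSet.toFinset.card := by
    apply Finset.card_le_card_of_injOn
      (fun v => if h : v = r then s(r, r) else s(v, par v h))
    · intro v hv
      have hv' : v ≠ r := Finset.ne_of_mem_erase hv
      beta_reduce
      rw [dif_neg hv', Finset.mem_coe, Set.mem_toFinset]
      exact (hpadj v hv')
    · intro v hv w hw hfvw
      have hv' : v ≠ r := by simpa using (hv : v ∈ (↑(Finset.univ.erase r) : Set V))
      have hw' : w ≠ r := by simpa using (hw : w ∈ (↑(Finset.univ.erase r) : Set V))
      simp only [dif_neg hv', dif_neg hw', Sym2.eq_iff] at hfvw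
      rcases hfvw with ⟨h1, _⟩ | ⟨h1, h2⟩
      · exact h1
      · exfalso
        have d1 := hpdist v hv'
        have d2 := hpdist w hw'
        rw [h2] at d1
        rw [← h1] at d2
        omega
  omega

lemma natCast_zmod_ne_zero {k m : ℕ} [NeZero k] (h1 : 1 ≤ m) (h2 : m < k) :
    (m : ZMod k) ≠ 0 := by
  rw [Ne, ZMod.natCast_eq_zero_iff]
  intro hdvd
  have := Nat.le_of_dvd (by omega) hdvd
  omega

lemma natCast_zmod_eq_one {k m : ℕ} (hk : 3 ≤ k) (h1 : 1 ≤ m) (h2 : m < k)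
    (h : (m : ZMod k) = 1) : m = 1 := by
  haveI : Fact (1 < k) := ⟨by omega⟩
  haveI : NeZero k := ⟨by omega⟩
  have := congrArg ZMod.val h
  rwa [ZMod.val_natCast_of_lt h2, ZMod.val_one] at this

lemma bridge_aux (G : SimpleGraph V) (hconn : G.Connected) {k : ℕ} [NeZero k]
    (hk3 : 3 ≤ k) (c : ZMod k → V) (hcinj : Function.Injective c)
    (hcadj : ∀ i, G.Adj (c i) (c (i + 1)))
    (hcardn : Fintype.card V = G.edgeSet.ncard)
    {a b : V} (hab : G.Adj a b)
    (hne : ∀ i : ZMod k, s(a, b) ≠ s(c i, c (i + 1))) :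
    ¬(G.deleteEdges {s(a, b)}).Reachable a b := by
  intro hr
  set G' := G.deleteEdges {s(a, b)} with hG'def
  have hG' : G'.Connected := by
    apply connected_deleteEdges G hconn
    intro e he x y hxy
    rw [Set.mem_singleton_iff] at he
    subst he
    rw [Sym2.eq_iff] at hxy
    rcases hxy with ⟨rfl, rfl⟩ | ⟨rfl, rfl⟩
    · exact hr
    · exact hr.symm
  set e1 : Sym2 V := s(c 0, c (0 + 1)) with he1def
  set G'' := G'.deleteEdges {e1} with hG''def
  -- reachability around the cycle in G''
  have hreach1 : G''.Reachable (c ((0 : ZMod k) + (1 : ℕ))) (c ((0 : ZMod k) + (k : ℕ))) := by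
    apply chainReach G'' (fun m : ℕ => c ((0 : ZMod k) + (m : ℕ))) k (by omega)
    intro m h1 h2
    have hcast : ((0 : ZMod k) + ((m + 1 : ℕ) : ZMod k)) = ((0 : ZMod k) + (m : ℕ)) + 1 := by
      push_cast; ring
    rw [hcast]
    have hadj : G.Adj (c ((0 : ZMod k) + (m : ℕ))) (c (((0 : ZMod k) + (m : ℕ)) + 1)) :=
      hcadj _
    have hne0 : s(c ((0 : ZMod k) + (m : ℕ)), c (((0 : ZMod k) + (m : ℕ)) + 1)) ≠ s(a, b) :=
      fun hEq => (hne _) hEq.symm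
    have hne1 : s(c ((0 : ZMod k) + (m : ℕ)), c (((0 : ZMod k) + (m : ℕ)) + 1)) ≠ e1 := by
      rw [he1def]
      intro hEq
      rw [Sym2.eq_iff] at hEq
      rcases hEq with ⟨hx, -⟩ | ⟨hx, hy⟩
      · have := hcinj hx
        simp only [zero_add] at this
        exact natCast_zmod_ne_zero h1 h2 this
      · have hmx := hcinj hx
        have hmy := hcinj hy
        simp only [zero_add] at hmx hmy
        have hm1 : m = 1 := natCast_zmod_eq_one hk3 h1 h2 hmx
        subst hm1
        -- hmy : (1 : ZMod k) + 1 = 0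
        have : ((2 : ℕ) : ZMod k) = 0 := by push_cast; rw [← hmy]; ring
        rw [ZMod.natCast_eq_zero_iff] at this
        have := Nat.le_of_dvd (by omega) this
        omega
    rw [hG''def, hG'def]
    simp only [SimpleGraph.deleteEdges_adj, Set.mem_singleton_iff]
    exact ⟨⟨hadj, hne0⟩, hne1⟩
  have hreach1' : G''.Reachable (c (0 + 1)) (c 0) := by
    have h1 : ((0 : ZMod k) + ((1 : ℕ) : ZMod k)) = (0 : ZMod k) + 1 := by push_cast; ring
    have h2 : ((0 : ZMod k) + ((k : ℕ) : ZMod k)) = (0 : ZMod k) := by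
      rw [ZMod.natCast_self]; ring
    rwa [h1, h2] at hreach1
  have hG'' : G''.Connected := by
    apply connected_deleteEdges G' hG'
    intro e he x y hxy
    rw [Set.mem_singleton_iff] at he
    subst he
    rw [he1def, Sym2.eq_iff] at hxy
    rcases hxy with ⟨rfl, rfl⟩ | ⟨rfl, rfl⟩
    · exact hreach1'.symm
    · exact hreach1'
  -- counting
  have hcount := card_le_ncard_edgeSet G'' hG''
  have hE'' : G''.edgeSet = (G.edgeSet \ {s(a, b)}) \ {e1} := by
    rw [hG''def, hG'def, SimpleGraph.edgeSet_deleteEdges, SimpleGraph.edgeSet_deleteEdges]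
  have hab_mem : s(a, b) ∈ G.edgeSet := hab
  have he1_mem : e1 ∈ G.edgeSet \ {s(a, b)} := by
    constructor
    · exact hcadj 0
    · simp only [Set.mem_singleton_iff]
      exact fun hEq => (hne 0) hEq.symm
  have hc1 : (G.edgeSet \ {s(a, b)}).ncard = G.edgeSet.ncard - 1 :=
    Set.ncard_diff_singleton_of_mem hab_mem
  have hc2 : ((G.edgeSet \ {s(a, b)}) \ {e1}).ncard = (G.edgeSet \ {s(a, b)}).ncard - 1 :=
    Set.ncard_diff_singleton_of_mem he1_mem
  have hkcard : k ≤ Fintype.card V := by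
    have := Fintype.card_le_of_injective c hcinj
    rwa [ZMod.card] at this
  rw [hE'', hc2, hc1] at hcount
  have hpos : 1 ≤ G.edgeSet.ncard := by omega
  omega

noncomputable def rot {k : ℕ} (c : ZMod k → V) (hcinj : Function.Injective c) :
    Equiv.Perm V :=
  (Equiv.addRight (1 : ZMod k)).extendDomain (Equiv.ofInjective c hcinj)

lemma rot_apply {k : ℕ} (c : ZMod k → V) (hcinj : Function.Injective c) (j : ZMod k) :
    rot c hcinj (c j) = c (j + 1) := by
  have := Equiv.Perm.extendDomain_apply_image (Equiv.addRight (1 : ZMod k))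
    (Equiv.ofInjective c hcinj) j
  simpa [rot] using this

lemma rot_apply_not_mem {k : ℕ} (c : ZMod k → V) (hcinj : Function.Injective c) {v : V}
    (hv : v ∉ Set.range c) : rot c hcinj v = v :=
  Equiv.Perm.extendDomain_apply_not_subtype _ _ hv

lemma rot_support {k : ℕ} [NeZero k] (hk3 : 3 ≤ k) (c : ZMod k → V)
    (hcinj : Function.Injective c) :
    (rot c hcinj).support = Finset.univ.image c := by
  haveI : Fact (1 < k) := ⟨by omega⟩
  ext v
  simp only [Equiv.Perm.mem_support, Finset.mem_image, Finset.mem_univ, true_and]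
  constructor
  · intro hv
    by_contra hno
    push_neg at hno
    exact hv (rot_apply_not_mem c hcinj (fun ⟨j, hj⟩ => hno j hj))
  · rintro ⟨j, rfl⟩
    rw [rot_apply]
    intro hEq
    have := hcinj hEq
    simp only [add_eq_left] at this
    exact one_ne_zero this

lemma rot_support_card {k : ℕ} [NeZero k] (hk3 : 3 ≤ k) (c : ZMod k → V)
    (hcinj : Function.Injective c) :
    (rot c hcinj).support.card = k := by
  rw [rot_support hk3 c hcinj, Finset.card_image_of_injective _ hcinj,
    Finset.card_univ, ZMod.card]

lemma pow_addRight {k : ℕ} (m : ℕ) (x : ZMod k) :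
    ((Equiv.addRight (1 : ZMod k)) ^ m) x = x + m := by
  induction m with
  | zero => simp
  | succ m ih =>
    rw [pow_succ']
    simp only [Equiv.Perm.mul_apply, Equiv.coe_addRight] at *
    rw [ih]
    push_cast
    ring

lemma isCycle_addRight_one {k : ℕ} [NeZero k] (hk3 : 3 ≤ k) :
    (Equiv.addRight (1 : ZMod k)).IsCycle := by
  haveI : Fact (1 < k) := ⟨by omega⟩
  refine ⟨0, by simp, fun y _ => ?_⟩
  refine ⟨(y.val : ℤ), ?_⟩
  rw [zpow_natCast, pow_addRight]
  rw [zero_add]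
  exact ZMod.natCast_rightInverse y

lemma rot_isCycle {k : ℕ} [NeZero k] (hk3 : 3 ≤ k) (c : ZMod k → V)
    (hcinj : Function.Injective c) : (rot c hcinj).IsCycle := by
  have h := @Equiv.Perm.IsCycle.extendDomain (ZMod k) V (Equiv.addRight (1 : ZMod k))
    (· ∈ Set.range c) (fun v => Classical.propDecidable _) (Equiv.ofInjective c hcinj)
    (isCycle_addRight_one hk3)
  exact h

lemma rot_sign {k : ℕ} [NeZero k] (hk3 : 3 ≤ k) (hkodd : Odd k) (c : ZMod k → V)
    (hcinj : Function.Injective c) : Equiv.Perm.sign (rot c hcinj) = 1 := by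
  rw [(rot_isCycle hk3 c hcinj).sign, rot_support_card hk3 c hcinj, hkodd.neg_one_pow]
  simp

lemma rot_inv_apply {k : ℕ} (c : ZMod k → V) (hcinj : Function.Injective c) (j : ZMod k) :
    (rot c hcinj)⁻¹ (c j) = c (j - 1) := by
  rw [Equiv.Perm.inv_eq_iff_eq, rot_apply]
  congr 1
  ring

lemma rot_ne_inv {k : ℕ} [NeZero k] (hk3 : 3 ≤ k) (c : ZMod k → V)
    (hcinj : Function.Injective c) : rot c hcinj ≠ (rot c hcinj)⁻¹ := by
  intro hEq
  have h1 := rot_apply c hcinj 0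
  have h2 := rot_inv_apply c hcinj 0
  rw [hEq, h2] at h1
  have := hcinj h1
  have h2 : ((2 : ℕ) : ZMod k) = 0 := by
    push_cast
    linear_combination -this
  rw [ZMod.natCast_eq_zero_iff] at h2
  have := Nat.le_of_dvd (by omega) h2
  omega

lemma perm_structure (G : SimpleGraph V) (hconn : G.Connected) {k : ℕ} [NeZero k]
    (hk3 : 3 ≤ k) (hkodd : Odd k) (c : ZMod k → V) (hcinj : Function.Injective c)
    (hcadj : ∀ i, G.Adj (c i) (c (i + 1)))
    (hcardn : Fintype.card V = G.edgeSet.ncard)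
    (σ : Equiv.Perm V) (hsc : σ.support.card = k)
    (hadj : ∀ v ∈ σ.support, G.Adj (σ v) v) :
    σ = rot c hcinj ∨ σ = (rot c hcinj)⁻¹ := by
  -- find an odd cycle factor
  have hsum : σ.cycleType.sum = k := by rw [Equiv.Perm.sum_cycleType, hsc]
  have hoddmem : ∃ n ∈ σ.cycleType, Odd n := by
    by_contra hno
    push_neg at hno
    have h2 : 2 ∣ σ.cycleType.sum := by
      apply Multiset.dvd_sum
      intro x hx
      have := hno x hx
      rw [Nat.not_odd_iff_even] at this
      exact this.two_dvd
    rw [hsum] at h2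
    rw [Nat.odd_iff] at hkodd
    omega
  obtain ⟨ℓ, hℓmem, hℓodd⟩ := hoddmem
  have hℓ2 : 2 ≤ ℓ := Equiv.Perm.two_le_of_mem_cycleType hℓmem
  have hℓ3 : 3 ≤ ℓ := by
    rcases Nat.lt_or_ge ℓ 3 with h | h
    · interval_cases ℓ
      · exact absurd hℓodd (by decide)
    · exact h
  rw [Equiv.Perm.cycleType_def, Multiset.mem_map] at hℓmem
  obtain ⟨τ, hτmem, hτcard⟩ := hℓmem
  have hτmem' : τ ∈ σ.cycleFactorsFinset := hτmem
  obtain ⟨hτcyc, hτeq⟩ := Equiv.Perm.mem_cycleFactorsFinset_iff.mp hτmem'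
  simp only [Function.comp_apply] at hτcard
  have hsub : τ.support ⊆ σ.support := by
    intro v hv
    rw [Equiv.Perm.mem_support] at hv ⊢
    rw [← hτeq v (Equiv.Perm.mem_support.mpr hv)]
    exact hv
  have horder : orderOf τ = ℓ := by rw [hτcyc.orderOf, hτcard]
  have hτpow_mem : ∀ (m : ℕ) (y : V), y ∈ τ.support → (τ ^ m) y ∈ τ.support := by
    intro m y hy
    exact (Equiv.Perm.pow_apply_mem_support).mpr hy
  -- claim A
  have claimA : ∀ y ∈ τ.support, ∃ i : ZMod k, s(σ y, y) = s(c i, c (i + 1)) := by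
    intro y hy
    by_contra hno
    push_neg at hno
    have hadjy : G.Adj (σ y) y := hadj y (hsub hy)
    refine bridge_aux G hconn hk3 c hcinj hcadj hcardn hadjy hno ?_
    have hτy : τ y = σ y := hτeq y hy
    have hτyne : τ y ≠ y := Equiv.Perm.mem_support.mp hy
    set H := G.deleteEdges {s(σ y, y)} with hHdef
    have hstep : ∀ m, 1 ≤ m → m < ℓ → H.Adj ((fun m : ℕ => (τ ^ m) y) m)
        ((fun m : ℕ => (τ ^ m) y) (m + 1)) := by
      intro m h1 h2
      simp only []
      have hmem : (τ ^ m) y ∈ τ.support := hτpow_mem m y hy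
      have hsucc : (τ ^ (m + 1)) y = σ ((τ ^ m) y) := by
        rw [pow_succ', Equiv.Perm.mul_apply]
        exact hτeq _ hmem
      refine SimpleGraph.deleteEdges_adj.mpr ⟨?_, ?_⟩
      · rw [hsucc]
        exact (hadj _ (hsub hmem)).symm
      · simp only [Set.mem_singleton_iff]
        intro hEq
        rw [← hτy, Sym2.eq_iff] at hEq
        rcases hEq with ⟨hx, hy'⟩ | ⟨hx, hy'⟩
        · -- (τ^m) y = τ y and (τ^(m+1)) y = y
          have hone : τ ^ (m + 1) = 1 := (hτcyc.pow_eq_one_iff' hτyne).mpr hy'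
          have hdvd : ℓ ∣ m + 1 := by rw [← horder]; exact orderOf_dvd_of_pow_eq_one hone
          have hle : ℓ ≤ m + 1 := Nat.le_of_dvd (by omega) hdvd
          have hm1 : m + 1 = ℓ := by omega
          obtain ⟨m', rfl⟩ : ∃ m', m = m' + 1 := ⟨m - 1, by omega⟩
          have hprev : (τ ^ m') y = y := by
            have hτm : τ ((τ ^ m') y) = τ y := by
              rw [← Equiv.Perm.mul_apply, ← pow_succ']
              exact hx
            exact τ.injective hτm
          have hone' : τ ^ m' = 1 := (hτcyc.pow_eq_one_iff' hτyne).mpr hprev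
          have hdvd' : ℓ ∣ m' := by rw [← horder]; exact orderOf_dvd_of_pow_eq_one hone'
          rcases Nat.eq_zero_or_pos m' with h0 | h0
          · omega
          · have := Nat.le_of_dvd h0 hdvd'
            omega
        · -- (τ^m) y = y
          have hone : τ ^ m = 1 := (hτcyc.pow_eq_one_iff' hτyne).mpr hx
          have hdvd : ℓ ∣ m := by rw [← horder]; exact orderOf_dvd_of_pow_eq_one hone
          have := Nat.le_of_dvd (by omega) hdvd
          omega
    have hr := chainReach H (fun m : ℕ => (τ ^ m) y) ℓ (by omega) hstep
    simp only [pow_one] at hr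
    have hℓy : (τ ^ ℓ) y = y := by
      rw [← horder, pow_orderOf_eq_one]
      rfl
    rw [hτy, hℓy] at hr
    exact hr
  -- no 2-cycles inside the orbit of τ
  have no2 : ∀ y ∈ τ.support, σ (σ y) ≠ y := by
    intro y hy hEq
    have hτyne : τ y ≠ y := Equiv.Perm.mem_support.mp hy
    have h1 : σ y = τ y := (hτeq y hy).symm
    have hmem' : τ y ∈ τ.support := Equiv.Perm.apply_mem_support.mpr hy
    have h2 : σ (τ y) = τ (τ y) := (hτeq _ hmem').symm
    have hpow2 : (τ ^ 2) y = y := by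
      rw [pow_two, Equiv.Perm.mul_apply, ← h2, ← h1]
      exact hEq
    have hone : τ ^ 2 = 1 := (hτcyc.pow_eq_one_iff' hτyne).mpr hpow2
    have hdvd : ℓ ∣ 2 := by rw [← horder]; exact orderOf_dvd_of_pow_eq_one hone
    have := Nat.le_of_dvd (by omega) hdvd
    omega
  -- claim B : structure of σ on the orbit of τ
  have claimB : ∀ y ∈ τ.support, ∃ j : ZMod k, y = c j ∧
      (σ y = c (j + 1) ∨ σ y = c (j - 1)) := by
    intro y hy
    obtain ⟨i, hi⟩ := claimA y hy
    rw [Sym2.eq_iff] at hi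
    rcases hi with ⟨h1, h2⟩ | ⟨h1, h2⟩
    · refine ⟨i + 1, h2, Or.inr ?_⟩
      rw [h1]
      congr 1
      ring
    · exact ⟨i, h2, Or.inl h1⟩
  -- propagation around the cycle
  have prop : ∀ (d : ZMod k), (d = 1 ∨ d = -1) → ∀ (j0 : ZMod k),
      c j0 ∈ τ.support → σ (c j0) = c (j0 + d) →
      ∀ m : ℕ, c (j0 + (m : ZMod k) * d) ∈ τ.support ∧
        σ (c (j0 + (m : ZMod k) * d)) = c (j0 + (m : ZMod k) * d + d) := by
    intro d hd j0 hj0 hs0 m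
    induction m with
    | zero =>
      constructor
      · simpa using hj0
      · simpa using hs0
    | succ m ih =>
      obtain ⟨ihmem, ihval⟩ := ih
      have hJ : (j0 + ((m + 1 : ℕ) : ZMod k) * d) = j0 + (m : ZMod k) * d + d := by
        push_cast
        ring
      rw [hJ]
      have hmemJ : c (j0 + (m : ZMod k) * d + d) ∈ τ.support := by
        rw [← ihval, ← hτeq _ ihmem]
        exact Equiv.Perm.apply_mem_support.mpr ihmem
      refine ⟨hmemJ, ?_⟩
      obtain ⟨j', hj'1, hj'2⟩ := claimB _ hmemJ
      have hj'J : j' = j0 + (m : ZMod k) * d + d := (hcinj hj'1.symm)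
      subst hj'J
      have hnw : σ (c (j0 + (m : ZMod k) * d + d)) ≠ c (j0 + (m : ZMod k) * d) := by
        intro hEq
        apply no2 _ ihmem
        rw [ihval, hEq]
      rcases hd with rfl | rfl
      · rcases hj'2 with h | h
        · exact h
        · exfalso
          apply hnw
          rw [h]
          congr 1
          ring
      · rcases hj'2 with h | h
        · exfalso
          apply hnw
          rw [h]
          congr 1
          ring
        · rw [h]
          congr 1
          ring
  -- starting point
  have hτne1 : τ.support.Nonempty := by
    rw [← Finset.card_pos, hτcard]
    omega
  obtain ⟨y0, hy0⟩ := hτne1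
  obtain ⟨j0', hj0'1, hj0'2⟩ := claimB y0 hy0
  rw [hj0'1] at hj0'2
  have hy0' : c j0' ∈ τ.support := by rwa [← hj0'1]
  have main : ∀ (d : ZMod k), (d = 1 ∨ d = -1) → σ (c j0') = c (j0' + d) →
      ∀ j : ZMod k, c j ∈ τ.support ∧ σ (c j) = c (j + d) := by
    intro d hd hs0 j
    obtain ⟨m, hm⟩ : ∃ m : ℕ, j0' + (m : ZMod k) * d = j := by
      rcases hd with rfl | rfl
      · refine ⟨(j - j0').val, ?_⟩
        rw [ZMod.natCast_rightInverse (j - j0')]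
        ring
      · refine ⟨(j0' - j).val, ?_⟩
        rw [ZMod.natCast_rightInverse (j0' - j)]
        ring
    have := prop d hd j0' hy0' hs0 m
    rwa [hm] at this
  have hsupp_eq : (∀ j, c j ∈ τ.support) → σ.support = Finset.univ.image c := by
    intro hall
    have hsubset : Finset.univ.image c ⊆ σ.support := by
      intro v hv
      rw [Finset.mem_image] at hv
      obtain ⟨j, -, rfl⟩ := hv
      exact hsub (hall j)
    refine (Finset.eq_of_subset_of_card_le hsubset ?_).symm
    rw [hsc, Finset.card_image_of_injective _ hcinj, Finset.card_univ, ZMod.card]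
  rcases hj0'2 with hcase | hcase
  · left
    have hall := main 1 (Or.inl rfl) hcase
    have hse := hsupp_eq (fun j => (hall j).1)
    ext v
    by_cases hv : v ∈ Set.range c
    · obtain ⟨j, rfl⟩ := hv
      rw [(hall j).2, rot_apply]
    · have hvs : v ∉ σ.support := by
        rw [hse, Finset.mem_image]
        push_neg
        exact fun j _ hEq => hv ⟨j, hEq⟩
      rw [Equiv.Perm.notMem_support.mp hvs, rot_apply_not_mem c hcinj hv]
  · right
    have hcase' : σ (c j0') = c (j0' + (-1)) := by
      rw [hcase]
      congr 1
      ring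
    have hall := main (-1) (Or.inr rfl) hcase'
    have hse := hsupp_eq (fun j => (hall j).1)
    ext v
    by_cases hv : v ∈ Set.range c
    · obtain ⟨j, rfl⟩ := hv
      rw [(hall j).2, rot_inv_apply]
      congr 1
      ring
    · have hvs : v ∉ σ.support := by
        rw [hse, Finset.mem_image]
        push_neg
        exact fun j _ hEq => hv ⟨j, hEq⟩
      rw [Equiv.Perm.notMem_support.mp hvs, eq_comm, Equiv.Perm.inv_eq_iff_eq]
      exact (rot_apply_not_mem c hcinj hv).symm

lemma coeff_term (G : SimpleGraph V) {k : ℕ} (hkn : k ≤ Fintype.card V) (σ : Equiv.Perm V) :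
    (((Equiv.Perm.sign σ : ℤ) : Polynomial ℝ) *
      ∏ i : V, (Matrix.charmatrix (transition G)) (σ i) i).coeff (Fintype.card V - k) =
    (if σ.support.card = k then
      ((Equiv.Perm.sign σ : ℤ) : ℝ) * ((-1 : ℝ) ^ k *
        ∏ i ∈ σ.support, transition G (σ i) i)
    else 0) := by
  have hdiag : ∀ i : V, transition G i i = 0 := by
    intro i
    simp [transition]
  have hsplit : (∏ i : V, (Matrix.charmatrix (transition G)) (σ i) i) =
      (∏ i ∈ σ.support, (Matrix.charmatrix (transition G)) (σ i) i) *
      ∏ i ∈ σ.supportᶜ, (Matrix.charmatrix (transition G)) (σ i) i :=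
    (Finset.prod_mul_prod_compl _ _).symm
  have h1 : ∀ i ∈ σ.supportᶜ, (Matrix.charmatrix (transition G)) (σ i) i = Polynomial.X := by
    intro i hi
    have hfix : σ i = i := Equiv.Perm.notMem_support.mp (Finset.mem_compl.mp hi)
    rw [hfix, Matrix.charmatrix_apply_eq, hdiag i]
    simp
  have h2 : ∀ i ∈ σ.support, (Matrix.charmatrix (transition G)) (σ i) i =
      Polynomial.C (-(transition G (σ i) i)) := by
    intro i hi
    have hne : σ i ≠ i := Equiv.Perm.mem_support.mp hi
    rw [Matrix.charmatrix_apply_ne _ _ _ hne, map_neg]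
  have hcast : ((Equiv.Perm.sign σ : ℤ) : Polynomial ℝ)
      = Polynomial.C ((Equiv.Perm.sign σ : ℤ) : ℝ) := by
    simp
  rw [hsplit, Finset.prod_congr rfl h1, Finset.prod_congr rfl h2, Finset.prod_const,
    ← map_prod, hcast, Polynomial.coeff_C_mul, Polynomial.coeff_C_mul,
    Polynomial.coeff_X_pow]
  have hsle : σ.support.card ≤ Fintype.card V := by
    simpa using Finset.card_le_univ σ.support
  rw [Finset.card_compl]
  by_cases hsk : σ.support.card = k
  · rw [if_pos hsk, if_pos (by omega)]
    have hpn : (∏ x ∈ σ.support, -transition G (σ x) x)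
        = (-1 : ℝ) ^ σ.support.card * ∏ x ∈ σ.support, transition G (σ x) x := by
      rw [← Finset.prod_const, ← Finset.prod_mul_distrib]
      simp [neg_one_mul]
    rw [hpn, hsk]
    ring
  · rw [if_neg hsk, if_neg (by omega), mul_zero, mul_zero]

end Helpers

/-- Let `k ≥ 3` be odd and `G ∈ 𝒪(k)` with unique cycle vertices
`c 0, …, c (k-1)` and `n` vertices. Then `ρ_(n-k) = -2·∏ᵢ (1/deg(c i))`, where the `ρ_j`
are the coefficients of the characteristic polynomial of the transition matrix. -/
theorem charpoly_coeff_cycle {V : Type*} [Fintype V] [DecidableEq V] (G : SimpleGraph V)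
    (hconn : G.Connected) (k : ℕ) [NeZero k] (hk3 : 3 ≤ k) (hkodd : Odd k)
    (c : ZMod k → V) (hcinj : Function.Injective c)
    (hcadj : ∀ i : ZMod k, G.Adj (c i) (c (i + 1)))
    (hcard : Fintype.card V = G.edgeFinset.card) :
    (transition G).charpoly.coeff (Fintype.card V - k) =
      -2 * ∏ i : ZMod k, (1 / (G.degree (c i) : ℝ)) := by
  have hkn : k ≤ Fintype.card V := by
    have := Fintype.card_le_of_injective c hcinj
    rwa [ZMod.card] at this
  have hcardn : Fintype.card V = G.edgeSet.ncard := by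
    rw [hcard, SimpleGraph.edgeFinset, ← Set.ncard_eq_toFinset_card']
  set R := rot c hcinj with hRdef
  have hRne : R ≠ R⁻¹ := rot_ne_inv hk3 c hcinj
  rw [show (transition G).charpoly = ((transition G).charmatrix).det from rfl, Matrix.det_apply', Polynomial.finset_sum_coeff,
    Finset.sum_congr rfl (fun σ _ => coeff_term G hkn σ)]
  rw [← Finset.sum_subset (Finset.subset_univ ({R, R⁻¹} : Finset (Equiv.Perm V)))
    (fun σ _ hσ => ?_)]
  swap
  · by_cases hc : σ.support.card = k
    · rw [if_pos hc]
      by_cases hA : ∀ v ∈ σ.support, G.Adj (σ v) v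
      · exfalso
        rcases perm_structure G hconn hk3 hkodd c hcinj hcadj hcardn σ hc hA with rfl | rfl <;>
          simp [hRdef] at hσ
      · push_neg at hA
        obtain ⟨v, hv, hnadj⟩ := hA
        have hz : transition G (σ v) v = 0 := by simp [transition, hnadj]
        have hzz : (∏ i ∈ σ.support, transition G (σ i) i) = 0 :=
          Finset.prod_eq_zero hv hz
        rw [hzz]
        ring
    · rw [if_neg hc]
  rw [Finset.sum_pair hRne]
  have hprod_rot : ∏ i ∈ R.support, transition G (R i) i
      = ∏ j : ZMod k, (1 / (G.degree (c j) : ℝ)) := by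
    rw [hRdef, rot_support hk3 c hcinj,
      Finset.prod_image (fun a _ b _ h => hcinj h)]
    have hterm : ∀ j : ZMod k, transition G (rot c hcinj (c j)) (c j)
        = 1 / (G.degree (c (j + 1)) : ℝ) := by
      intro j
      rw [rot_apply]
      simp [transition, (hcadj j).symm]
    rw [Finset.prod_congr rfl (fun j _ => hterm j)]
    exact Equiv.prod_comp (Equiv.addRight (1 : ZMod k))
      (fun j => 1 / (G.degree (c j) : ℝ))
  have hprod_rotinv : ∏ i ∈ R⁻¹.support, transition G (R⁻¹ i) i
      = ∏ j : ZMod k, (1 / (G.degree (c j) : ℝ)) := by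
    rw [Equiv.Perm.support_inv, hRdef, rot_support hk3 c hcinj,
      Finset.prod_image (fun a _ b _ h => hcinj h)]
    have hterm : ∀ j : ZMod k, transition G ((rot c hcinj)⁻¹ (c j)) (c j)
        = 1 / (G.degree (c (j - 1)) : ℝ) := by
      intro j
      rw [rot_inv_apply]
      have hadj : G.Adj (c (j - 1)) (c j) := by
        have := hcadj (j - 1)
        rwa [sub_add_cancel] at this
      simp [transition, hadj]
    rw [Finset.prod_congr rfl (fun j _ => hterm j)]
    exact Equiv.prod_comp (Equiv.subRight (1 : ZMod k))
      (fun j => 1 / (G.degree (c j) : ℝ))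
  have hsign : ((Equiv.Perm.sign R : ℤ) : ℝ) = 1 := by
    rw [hRdef, rot_sign hk3 hkodd c hcinj]
    simp
  have hsigninv : ((Equiv.Perm.sign R⁻¹ : ℤ) : ℝ) = 1 := by
    rw [map_inv, hRdef, rot_sign hk3 hkodd c hcinj]
    simp
  have hcardR : R.support.card = k := rot_support_card hk3 c hcinj
  have hcardRinv : R⁻¹.support.card = k := by rw [Equiv.Perm.support_inv]; exact hcardR
  rw [if_pos hcardR, if_pos hcardRinv, hprod_rot, hprod_rotinv, hsign, hsigninv,
    hkodd.neg_one_pow]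
  ring


end GroverPaper
end
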